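/- arXiv:1912.03575 — 5 statements merged into one kernel-verified Lean document; each statement's English description precedes it below -/
import Mathlib

section
/- Let (M,H,g) be a sub-Riemannian manifold and V a complement, TM = H ⊕ V. Then there exists a unique partial connection ∇̄ on H in the direction of H compatible with g whose torsion satisfies t(H,H) ⊆ V, i.e. the H-component of the torsion vanishes. Its difference tensor κ from a reference compatible partial connection ∇̄′ with torsion horizontal part t′_H is given by ⟨κ(X)Y₁,Y₂⟩_g = ½(−⟨t′_H(X,Y₁),Y₂⟩_g + ⟨t′_H(Y₁,Y₂),X⟩_g + ⟨t′_H(X,Y₂),Y₁⟩_g). -/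
/-!
Two partial connections compatible with `g` differ by a tensor `κ` whose pairing
`⟨κ(X)Y₁, Y₂⟩` is skew in `(Y₁, Y₂)`, and adding `κ` changes the torsion by
`κ(X)Y − κ(Y)X`. A Koszul-type formula in the torsion `t′_H` of the reference connection,
turned into a vector by the orthonormal frame, gives the `κ` that cancels `t′_H`. For
uniqueness, the difference of two such connections is symmetric in its two arguments and,
paired with `g`, skew in the last two; a tensor with both symmetries vanishes when `2` is
invertible.
-/

/-- A partial connection on `H` in the direction of `H`, in the algebraic model
where `C` plays the role of smooth functions, `W` of vector fields, `H ⊆ W` of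
horizontal vector fields and `a X f` is the derivative of the function `f` along
the vector field `X`.  The connection axioms are imposed for horizontal
arguments. -/
structure PartialConn (C W : Type*) [CommRing C] [AddCommGroup W] [Module C W]
    (H : Submodule C W) (a : W → C → C) where
  cov : W → W → W
  mem : ∀ X Y, X ∈ H → Y ∈ H → cov X Y ∈ H
  add_left : ∀ X X' Y, X ∈ H → X' ∈ H → Y ∈ H → cov (X + X') Y = cov X Y + cov X' Y
  smul_left : ∀ (c : C) X Y, X ∈ H → Y ∈ H → cov (c • X) Y = c • cov X Y
  add_right : ∀ X Y Y', X ∈ H → Y ∈ H → Y' ∈ H → cov X (Y + Y') = cov X Y + cov X Y'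
  leibniz : ∀ (c : C) X Y, X ∈ H → Y ∈ H → cov X (c • Y) = a X c • Y + c • cov X Y

theorem eq_zero_of_symm_of_antisymm {α R : Type*} [Ring R] [Invertible (2 : R)] {S : Set α}
    {f : α → α → α → R}
    (hsymm : ∀ x ∈ S, ∀ y ∈ S, ∀ z ∈ S, f x y z = f y x z)
    (hanti : ∀ x ∈ S, ∀ y ∈ S, ∀ z ∈ S, f x y z = -f x z y) :
    ∀ x ∈ S, ∀ y ∈ S, ∀ z ∈ S, f x y z = 0 := by
  intro x hx y hy z hz
  have hneg : f x y z = -f x y z :=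
    calc f x y z = f y x z := hsymm x hx y hy z hz
      _ = -f y z x := hanti y hy x hx z hz
      _ = -f z y x := by rw [hsymm y hy z hz x hx]
      _ = f z x y := by rw [hanti z hz y hy x hx, neg_neg]
      _ = f x z y := hsymm z hz x hx y hy
      _ = -f x y z := hanti x hx z hz y hy
  calc f x y z = ⅟2 * (f x y z + f x y z) := by rw [← two_mul, invOf_mul_cancel_left]
    _ = 0 := by rw [add_eq_zero_iff_eq_neg.mpr hneg, mul_zero]

theorem Submodule.span_range_eq_of_forall_eq_sum {R M ι : Type*} [Semiring R] [AddCommMonoid M]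
    [Module R M] [Fintype ι] {H : Submodule R M} {e : ι → M} (he : ∀ i, e i ∈ H)
    (hspan : ∀ w ∈ H, ∃ c : ι → R, w = ∑ i, c i • e i) : Submodule.span R (Set.range e) = H := by
  refine le_antisymm (Submodule.span_le.mpr (Set.range_subset_iff.mpr he)) fun w hw => ?_
  obtain ⟨c, rfl⟩ := hspan w hw
  exact Submodule.mem_span_range_iff_exists_fun R |>.mpr ⟨c, rfl⟩

section Frame

variable {R M : Type*} [CommRing R] [AddCommGroup M] [Module R M] {ι : Type*} [Fintype ι]

def frameSharp (e : ι → M) : (M →ₗ[R] R) →ₗ[R] M :=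
  ∑ i, (LinearMap.applyₗ (e i)).smulRight (e i)

theorem frameSharp_apply (e : ι → M) (φ : M →ₗ[R] R) : frameSharp e φ = ∑ i, φ (e i) • e i := by
  simp [frameSharp]

theorem frameSharp_mem_span (e : ι → M) (φ : M →ₗ[R] R) :
    frameSharp e φ ∈ Submodule.span R (Set.range e) := by
  rw [frameSharp_apply]
  exact Submodule.sum_mem _ fun i _ => Submodule.smul_mem _ _ (Submodule.subset_span ⟨i, rfl⟩)

theorem apply_frameSharp [DecidableEq ι] {B : LinearMap.BilinForm R M} {e : ι → M}
    (horth : ∀ i j, B (e i) (e j) = if i = j then 1 else 0) (φ : M →ₗ[R] R) {w : M}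
    (hw : w ∈ Submodule.span R (Set.range e)) : B (frameSharp e φ) w = φ w := by
  refine LinearMap.eqOn_span (f := B (frameSharp e φ)) ?_ hw
  rintro _ ⟨j, rfl⟩
  simp [frameSharp_apply, horth]

end Frame

section Koszul

variable {R M : Type*} [CommRing R] [Invertible (2 : R)] [AddCommGroup M] [Module R M]
  {ι : Type*} [Fintype ι]

def koszulTensor (B : LinearMap.BilinForm R M) (T : M →ₗ[R] M →ₗ[R] M) (e : ι → M) :
    M →ₗ[R] M →ₗ[R] M :=
  -- `P X Y₁` is the functional `Y₂ ↦ B (T Y₁ Y₂) X`, turned into a vector by `frameSharp e`.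
  let P := ((LinearMap.llcomp R M M R ∘ₗ B.flip).compl₂ T).compr₂ (frameSharp e)
  (⅟2 : R) • (P + P.flip - T.compr₂ (frameSharp e ∘ₗ B))

theorem koszulTensor_mem_span (B : LinearMap.BilinForm R M) (T : M →ₗ[R] M →ₗ[R] M) (e : ι → M)
    (X Y : M) : koszulTensor B T e X Y ∈ Submodule.span R (Set.range e) := by
  simp only [koszulTensor, LinearMap.smul_apply, LinearMap.sub_apply, LinearMap.add_apply,
    LinearMap.flip_apply, LinearMap.compr₂_apply, LinearMap.comp_apply]
  exact Submodule.smul_mem _ _ (sub_mem (add_mem (frameSharp_mem_span _ _)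
    (frameSharp_mem_span _ _)) (frameSharp_mem_span _ _))

variable [DecidableEq ι] {B : LinearMap.BilinForm R M} {T : M →ₗ[R] M →ₗ[R] M} {e : ι → M}

theorem apply_koszulTensor (horth : ∀ i j, B (e i) (e j) = if i = j then 1 else 0)
    (X Y₁ : M) {Y₂ : M} (hY₂ : Y₂ ∈ Submodule.span R (Set.range e)) :
    B (koszulTensor B T e X Y₁) Y₂ =
      ⅟2 * (-B (T X Y₁) Y₂ + B (T Y₁ Y₂) X + B (T X Y₂) Y₁) := by
  simp only [koszulTensor, LinearMap.smul_apply, LinearMap.sub_apply, LinearMap.add_apply,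
    LinearMap.compr₂_apply, LinearMap.compl₂_apply, LinearMap.coe_comp, Function.comp_apply,
    LinearMap.flip_apply, map_smul, map_sub, map_add, apply_frameSharp horth _ hY₂,
    LinearMap.llcomp_apply, LinearMap.BilinForm.flip_apply, smul_eq_mul]
  ring

theorem koszulTensor_add_swap (horth : ∀ i j, B (e i) (e j) = if i = j then 1 else 0)
    (hT : ∀ X Y, T Y X = -T X Y) (X : M) {Y₁ Y₂ : M}
    (hY₁ : Y₁ ∈ Submodule.span R (Set.range e)) (hY₂ : Y₂ ∈ Submodule.span R (Set.range e)) :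
    B (koszulTensor B T e X Y₁) Y₂ + B (koszulTensor B T e X Y₂) Y₁ = 0 := by
  rw [apply_koszulTensor horth _ _ hY₁, apply_koszulTensor horth _ _ hY₂, hT Y₁ Y₂]
  simp only [map_neg, LinearMap.neg_apply]
  ring

theorem koszulTensor_sub_swap (horth : ∀ i j, B (e i) (e j) = if i = j then 1 else 0)
    (hnd : ∀ v ∈ Submodule.span R (Set.range e),
      (∀ w ∈ Submodule.span R (Set.range e), B v w = 0) → v = 0)
    (hT : ∀ X Y, T Y X = -T X Y) {X Y : M} (hTXY : T X Y ∈ Submodule.span R (Set.range e)) :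
    koszulTensor B T e X Y - koszulTensor B T e Y X = -T X Y := by
  rw [← sub_eq_zero, sub_neg_eq_add]
  refine hnd _ (add_mem (sub_mem (koszulTensor_mem_span _ _ _ _ _)
    (koszulTensor_mem_span _ _ _ _ _)) hTXY) fun Z hZ => ?_
  rw [map_add, map_sub, LinearMap.add_apply, LinearMap.sub_apply, apply_koszulTensor horth _ _ hZ,
    apply_koszulTensor horth _ _ hZ, hT X Y]
  simp only [map_neg, LinearMap.neg_apply]
  linear_combination -B (T X Y) Z * invOf_two_add_invOf_two (R := R)

end Koszul

namespace PartialConn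

variable {C W : Type*} [CommRing C] [AddCommGroup W] [Module C W] {H : Submodule C W}
  {a : W → C → C}

def torsion (D : PartialConn C W H a) (β : W → W → W) (X Y : W) : W :=
  D.cov X Y - D.cov Y X - β X Y

def IsCompatible (D : PartialConn C W H a) (B : LinearMap.BilinForm C W) : Prop :=
  ∀ Z Y₁ Y₂, Z ∈ H → Y₁ ∈ H → Y₂ ∈ H → a Z (B Y₁ Y₂) = B (D.cov Z Y₁) Y₂ + B Y₁ (D.cov Z Y₂)

variable (D : PartialConn C W H a) {β : W → W → W}

theorem torsion_swap (hβ_anti : ∀ X Y, β X Y = -β Y X) (X Y : W) :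
    D.torsion β Y X = -D.torsion β X Y := by
  rw [torsion, torsion, hβ_anti]
  abel

theorem torsion_add_left (hβ_add₁ : ∀ X Y Z, β (X + Y) Z = β X Z + β Y Z) {X X' Y : W}
    (hX : X ∈ H) (hX' : X' ∈ H) (hY : Y ∈ H) :
    D.torsion β (X + X') Y = D.torsion β X Y + D.torsion β X' Y := by
  rw [torsion, torsion, torsion, D.add_left X X' Y hX hX' hY, D.add_right Y X X' hY hX hX',
    hβ_add₁]
  abel

theorem torsion_smul_left (hβ_anti : ∀ X Y, β X Y = -β Y X)
    (hβ_leib : ∀ X (f : C) Y, β X (f • Y) = a X f • Y + f • β X Y) (c : C) {X Y : W}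
    (hX : X ∈ H) (hY : Y ∈ H) : D.torsion β (c • X) Y = c • D.torsion β X Y := by
  rw [torsion, torsion, D.smul_left c X Y hX hY, D.leibniz c Y X hY hX, hβ_anti, hβ_leib,
    hβ_anti X Y]
  simp only [smul_sub, smul_neg]
  abel

-- Precomposing with `p` makes the horizontal part of the torsion bilinear on all of `W`.
def horizontalTorsion (p : W →ₗ[C] W) (hp : ∀ x, p x ∈ H)
    (hβ_anti : ∀ X Y, β X Y = -β Y X) (hβ_add₁ : ∀ X Y Z, β (X + Y) Z = β X Z + β Y Z)
    (hβ_leib : ∀ X (f : C) Y, β X (f • Y) = a X f • Y + f • β X Y) : W →ₗ[C] W →ₗ[C] W :=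
  LinearMap.mk₂ C (fun X Y => p (D.torsion β (p X) (p Y)))
    (fun X X' Y => by
      simp only [map_add, D.torsion_add_left hβ_add₁ (hp X) (hp X') (hp Y)])
    (fun c X Y => by
      simp only [map_smul, D.torsion_smul_left hβ_anti hβ_leib c (hp X) (hp Y)])
    (fun X Y Y' => by
      rw [map_add, D.torsion_swap hβ_anti (p Y + p Y'),
        D.torsion_add_left hβ_add₁ (hp Y) (hp Y') (hp X), D.torsion_swap hβ_anti (p Y),
        D.torsion_swap hβ_anti (p Y'), neg_add, map_add])
    (fun c X Y => by
      rw [map_smul, D.torsion_swap hβ_anti (c • p Y),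
        D.torsion_smul_left hβ_anti hβ_leib c (hp Y) (hp X), D.torsion_swap hβ_anti (p Y),
        map_neg, map_neg, map_smul, smul_neg])

variable {D} {p : W →ₗ[C] W} {hp : ∀ x, p x ∈ H} {hβ_anti : ∀ X Y, β X Y = -β Y X}
  {hβ_add₁ : ∀ X Y Z, β (X + Y) Z = β X Z + β Y Z}
  {hβ_leib : ∀ X (f : C) Y, β X (f • Y) = a X f • Y + f • β X Y}

theorem horizontalTorsion_apply (hp_id : ∀ x ∈ H, p x = x) {X Y : W} (hX : X ∈ H)
    (hY : Y ∈ H) :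
    D.horizontalTorsion p hp hβ_anti hβ_add₁ hβ_leib X Y = p (D.torsion β X Y) := by
  change p (D.torsion β (p X) (p Y)) = _
  rw [hp_id X hX, hp_id Y hY]

theorem horizontalTorsion_swap (X Y : W) :
    D.horizontalTorsion p hp hβ_anti hβ_add₁ hβ_leib Y X =
      -D.horizontalTorsion p hp hβ_anti hβ_add₁ hβ_leib X Y := by
  change p (D.torsion β (p Y) (p X)) = -p (D.torsion β (p X) (p Y))
  rw [D.torsion_swap hβ_anti, map_neg]

variable (D) in
def addTensor (κ : W →ₗ[C] W →ₗ[C] W) (hκ : ∀ X Y, X ∈ H → Y ∈ H → κ X Y ∈ H) :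
    PartialConn C W H a where
  cov X Y := D.cov X Y + κ X Y
  mem X Y hX hY := add_mem (D.mem X Y hX hY) (hκ X Y hX hY)
  add_left X X' Y hX hX' hY := by
    rw [D.add_left X X' Y hX hX' hY, map_add, LinearMap.add_apply]
    abel
  smul_left c X Y hX hY := by
    rw [D.smul_left c X Y hX hY, map_smul, LinearMap.smul_apply, smul_add]
  add_right X Y Y' hX hY hY' := by
    rw [D.add_right X Y Y' hX hY hY', map_add]
    abel
  leibniz c X Y hX hY := by
    rw [D.leibniz c X Y hX hY, map_smul, smul_add, add_assoc]

variable {κ : W →ₗ[C] W →ₗ[C] W} {hκ : ∀ X Y, X ∈ H → Y ∈ H → κ X Y ∈ H}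

theorem addTensor_cov (X Y : W) : (D.addTensor κ hκ).cov X Y = D.cov X Y + κ X Y := rfl

theorem torsion_addTensor (X Y : W) :
    (D.addTensor κ hκ).torsion β X Y = D.torsion β X Y + (κ X Y - κ Y X) := by
  simp only [torsion, addTensor_cov]
  abel

theorem IsCompatible.addTensor {B : LinearMap.BilinForm C W} (hD : D.IsCompatible B)
    (hκ_skew : ∀ Z Y₁ Y₂, Z ∈ H → Y₁ ∈ H → Y₂ ∈ H → B (κ Z Y₁) Y₂ + B Y₁ (κ Z Y₂) = 0) :
    (D.addTensor κ hκ).IsCompatible B := by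
  intro Z Y₁ Y₂ hZ hY₁ hY₂
  rw [addTensor_cov, addTensor_cov, map_add, LinearMap.add_apply, map_add,
    hD Z Y₁ Y₂ hZ hY₁ hY₂]
  linear_combination -hκ_skew Z Y₁ Y₂ hZ hY₁ hY₂

variable [Invertible (2 : C)] {B : LinearMap.BilinForm C W} {T : W →ₗ[C] W →ₗ[C] W}
  {ι : Type*} [Fintype ι] [DecidableEq ι] {e : ι → W}

theorem IsCompatible.addTensor_koszulTensor (hD : D.IsCompatible B) (hB : ∀ v w, B v w = B w v)
    (hT : ∀ X Y, T Y X = -T X Y) (horth : ∀ i j, B (e i) (e j) = if i = j then 1 else 0)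
    (hH : Submodule.span C (Set.range e) = H) :
    (D.addTensor (koszulTensor B T e)
      fun X Y _ _ => hH ▸ koszulTensor_mem_span B T e X Y).IsCompatible B :=
  hD.addTensor fun Z Y₁ Y₂ _ hY₁ hY₂ => by
    rw [hB Y₁]
    exact koszulTensor_add_swap horth hT Z (hH ▸ hY₁) (hH ▸ hY₂)

theorem torsion_addTensor_koszulTensor (hT : ∀ X Y, T Y X = -T X Y)
    (horth : ∀ i j, B (e i) (e j) = if i = j then 1 else 0)
    (hnd : ∀ v ∈ H, (∀ w ∈ H, B v w = 0) → v = 0) (hH : Submodule.span C (Set.range e) = H)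
    (hT_mem : ∀ X Y, T X Y ∈ H) (hp_id : ∀ x ∈ H, p x = x) (X Y : W) :
    p ((D.addTensor (koszulTensor B T e)
      fun X Y _ _ => hH ▸ koszulTensor_mem_span B T e X Y).torsion β X Y) =
      p (D.torsion β X Y) - T X Y := by
  subst hH
  rw [torsion_addTensor, map_add, hp_id _ (sub_mem (koszulTensor_mem_span _ _ _ _ _)
    (koszulTensor_mem_span _ _ _ _ _)), koszulTensor_sub_swap horth hnd hT (hT_mem X Y),
    sub_eq_add_neg]

theorem cov_eq_of_isCompatible {D₁ D₂ : PartialConn C W H a} (hB : ∀ v w, B v w = B w v)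
    (hnd : ∀ v ∈ H, (∀ w ∈ H, B v w = 0) → v = 0) (hp_id : ∀ x ∈ H, p x = x)
    (h₁ : D₁.IsCompatible B) (h₂ : D₂.IsCompatible B)
    (ht : ∀ X Y, X ∈ H → Y ∈ H → p (D₁.torsion β X Y) = p (D₂.torsion β X Y)) :
    ∀ X Y, X ∈ H → Y ∈ H → D₁.cov X Y = D₂.cov X Y := by
  set δ : W → W → W := fun X Y => D₁.cov X Y - D₂.cov X Y with hδ
  have hδ_mem : ∀ X Y, X ∈ H → Y ∈ H → δ X Y ∈ H := fun X Y hX hY =>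
    sub_mem (D₁.mem X Y hX hY) (D₂.mem X Y hX hY)
  have hδ_symm : ∀ X Y, X ∈ H → Y ∈ H → δ X Y = δ Y X := by
    intro X Y hX hY
    have hdiff : δ X Y - δ Y X = D₁.torsion β X Y - D₂.torsion β X Y := by
      simp only [hδ, torsion]
      abel
    rw [← sub_eq_zero, ← hp_id _ (sub_mem (hδ_mem X Y hX hY) (hδ_mem Y X hY hX)), hdiff,
      map_sub, ht X Y hX hY, sub_self]
  have hδ_skew : ∀ X Y Z, X ∈ H → Y ∈ H → Z ∈ H → B (δ X Y) Z = -B (δ X Z) Y := by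
    intro X Y Z hX hY hZ
    have h := (h₁ X Y Z hX hY hZ).symm.trans (h₂ X Y Z hX hY hZ)
    rw [hB Y, hB Y] at h
    simp only [hδ, map_sub, LinearMap.sub_apply]
    linear_combination h
  have hδ_zero := eq_zero_of_symm_of_antisymm (S := H) (f := fun X Y Z => B (δ X Y) Z)
    (fun X hX Y hY Z _ => by rw [hδ_symm X Y hX hY]) fun X hX Y hY Z hZ => hδ_skew X Y Z hX hY hZ
  exact fun X Y hX hY => sub_eq_zero.mp (hnd _ (hδ_mem X Y hX hY) (hδ_zero X hX Y hY))

end PartialConn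

theorem half_smul_eq_invOf_two_mul {A : Type*} [Semiring A] [Algebra ℝ A] [Invertible (2 : A)]
    (c : A) : (1 / 2 : ℝ) • c = ⅟2 * c := by
  rw [Algebra.smul_def]
  congr 1
  refine (invOf_eq_left_inv ?_).symm
  rw [← map_ofNat (algebraMap ℝ A) 2, ← map_mul]
  norm_num

theorem stmt3_general {C W : Type*} [CommRing C] [Algebra ℝ C] [AddCommGroup W] [Module C W]
    (H : Submodule C W) (prH : W →ₗ[C] W)
    (hprH_mem : ∀ x, prH x ∈ H) (hprH_id : ∀ x ∈ H, prH x = x)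
    (a : W → C → C) (β : W → W → W) (g : W → W → C)
    (hg_symm : ∀ v w, g v w = g w v)
    (hg_addl : ∀ u v w, g (u + v) w = g u w + g v w)
    (hg_smull : ∀ (c : C) v w, g (c • v) w = c * g v w)
    (hg_nondeg : ∀ v ∈ H, (∀ w ∈ H, g v w = 0) → v = 0)
    (n : ℕ) (e : Fin n → W) (he : ∀ i, e i ∈ H)
    (horth : ∀ i j, g (e i) (e j) = if i = j then 1 else 0)
    (hspan : ∀ w ∈ H, ∃ c : Fin n → C, w = ∑ i, c i • e i)
    (hβ_anti : ∀ X Y, β X Y = - β Y X)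
    (hβ_add₁ : ∀ X Y Z, β (X + Y) Z = β X Z + β Y Z)
    (hβ_leib : ∀ X (f : C) Y, β X (f • Y) = a X f • Y + f • β X Y)
    (D' : PartialConn C W H a)
    (hD'compat : ∀ Z Y₁ Y₂, Z ∈ H → Y₁ ∈ H → Y₂ ∈ H →
      a Z (g Y₁ Y₂) = g (D'.cov Z Y₁) Y₂ + g Y₁ (D'.cov Z Y₂)) :
    ∃ D : PartialConn C W H a,
      ((∀ Z Y₁ Y₂, Z ∈ H → Y₁ ∈ H → Y₂ ∈ H →
          a Z (g Y₁ Y₂) = g (D.cov Z Y₁) Y₂ + g Y₁ (D.cov Z Y₂)) ∧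
        (∀ X Y, X ∈ H → Y ∈ H → prH (D.cov X Y - D.cov Y X - β X Y) = 0) ∧
        (∀ X Y₁ Y₂, X ∈ H → Y₁ ∈ H → Y₂ ∈ H →
          g (D.cov X Y₁ - D'.cov X Y₁) Y₂ =
            (1 / 2 : ℝ) •
              (- g (prH (D'.cov X Y₁ - D'.cov Y₁ X - β X Y₁)) Y₂
                + g (prH (D'.cov Y₁ Y₂ - D'.cov Y₂ Y₁ - β Y₁ Y₂)) X
                + g (prH (D'.cov X Y₂ - D'.cov Y₂ X - β X Y₂)) Y₁))) ∧
      ∀ D'' : PartialConn C W H a,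
        (∀ Z Y₁ Y₂, Z ∈ H → Y₁ ∈ H → Y₂ ∈ H →
          a Z (g Y₁ Y₂) = g (D''.cov Z Y₁) Y₂ + g Y₁ (D''.cov Z Y₂)) →
        (∀ X Y, X ∈ H → Y ∈ H → prH (D''.cov X Y - D''.cov Y X - β X Y) = 0) →
        ∀ X Y, X ∈ H → Y ∈ H → D''.cov X Y = D.cov X Y := by
  let _ : Invertible (2 : C) := (Invertible.map (algebraMap ℝ C) 2).copy 2 (map_ofNat _ 2).symm
  let B : LinearMap.BilinForm C W := LinearMap.mk₂ C g hg_addl hg_smull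
    (fun u v w => by rw [hg_symm, hg_addl, hg_symm v, hg_symm w])
    (fun c u v => by rw [hg_symm, hg_smull, hg_symm, smul_eq_mul])
  have hH := Submodule.span_range_eq_of_forall_eq_sum he hspan
  let T := D'.horizontalTorsion prH hprH_mem hβ_anti hβ_add₁ hβ_leib
  have hT_swap : ∀ X Y, T Y X = -T X Y := PartialConn.horizontalTorsion_swap
  have hT : ∀ X Y, X ∈ H → Y ∈ H → T X Y = prH (D'.torsion β X Y) := fun _ _ hX hY =>
    PartialConn.horizontalTorsion_apply hprH_id hX hY
  let D := D'.addTensor (koszulTensor B T e) fun X Y _ _ => hH ▸ koszulTensor_mem_span B T e X Y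
  have hD' : D'.IsCompatible B := hD'compat
  have hcompat : D.IsCompatible B := hD'.addTensor_koszulTensor hg_symm hT_swap horth hH
  have htorsion : ∀ X Y, X ∈ H → Y ∈ H → prH (D.torsion β X Y) = 0 :=
    fun X Y hX hY => by
      rw [PartialConn.torsion_addTensor_koszulTensor (B := B) hT_swap horth hg_nondeg hH
        (fun _ _ => hprH_mem _) hprH_id, hT X Y hX hY, sub_self]
  refine ⟨D, ⟨hcompat, htorsion, fun X Y₁ Y₂ hX hY₁ hY₂ => ?_⟩,
    fun D'' h₁ h₂ => PartialConn.cov_eq_of_isCompatible (B := B) hg_symm hg_nondeg hprH_id h₁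
      hcompat fun X Y hX hY => (h₂ X Y hX hY).trans (htorsion X Y hX hY).symm⟩
  rw [PartialConn.addTensor_cov, add_sub_cancel_left, half_smul_eq_invOf_two_mul]
  refine (apply_koszulTensor (B := B) horth X Y₁ (hH ▸ hY₂)).trans ?_
  rw [hT X Y₁ hX hY₁, hT Y₁ Y₂ hY₁ hY₂, hT X Y₂ hX hY₂]
  rfl

/-- **Existence and uniqueness of the compatible partial connection with torsion
in `V` (Lemma 2.6 (c)).**
Given a sub-Riemannian structure `(H,g)` (with a local orthonormal frame `e` of
`H`) and a complement `V` with projection `prH` (so `t′_H = prH ∘ t′`), there is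
a unique partial connection `D` on `H` in the direction of `H` compatible with
`g` whose torsion satisfies `t(H,H) ⊆ V`, i.e. `prH (t(X,Y)) = 0`; its
difference `κ(X)Y = D_X Y − D′_X Y` from any reference compatible partial
connection `D′` is given by
`⟨κ(X)Y₁,Y₂⟩ = ½(−⟨t′_H(X,Y₁),Y₂⟩ + ⟨t′_H(Y₁,Y₂),X⟩ + ⟨t′_H(X,Y₂),Y₁⟩)`. -/
theorem stmt3 {C W : Type*} [CommRing C] [Algebra ℝ C] [AddCommGroup W] [Module C W]
    (H V : Submodule C W) (prH : W →ₗ[C] W)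
    (hprH_mem : ∀ x, prH x ∈ H) (hprH_id : ∀ x ∈ H, prH x = x)
    (hprV : ∀ x, x - prH x ∈ V) (hVker : ∀ v ∈ V, prH v = 0)
    (a : W → C → C) (β : W → W → W) (g : W → W → C)
    (hg_symm : ∀ v w, g v w = g w v)
    (hg_addl : ∀ u v w, g (u + v) w = g u w + g v w)
    (hg_smull : ∀ (c : C) v w, g (c • v) w = c * g v w)
    (hg_nondeg : ∀ v ∈ H, (∀ w ∈ H, g v w = 0) → v = 0)
    (htwo : ∀ c : C, c + c = 0 → c = 0)
    (n : ℕ) (e : Fin n → W) (he : ∀ i, e i ∈ H)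
    (horth : ∀ i j, g (e i) (e j) = if i = j then 1 else 0)
    (hspan : ∀ w ∈ H, ∃ c : Fin n → C, w = ∑ i, c i • e i)
    (ha_add₁ : ∀ X Y c, a (X + Y) c = a X c + a Y c)
    (ha_smul₁ : ∀ (f : C) X c, a (f • X) c = f * a X c)
    (ha_add₂ : ∀ X c c', a X (c + c') = a X c + a X c')
    (ha_mul : ∀ X c c', a X (c * c') = a X c * c' + c * a X c')
    (hβ_anti : ∀ X Y, β X Y = - β Y X)
    (hβ_add₁ : ∀ X Y Z, β (X + Y) Z = β X Z + β Y Z)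
    (hβ_leib : ∀ X (f : C) Y, β X (f • Y) = a X f • Y + f • β X Y)
    (D' : PartialConn C W H a)
    (hD'compat : ∀ Z Y₁ Y₂, Z ∈ H → Y₁ ∈ H → Y₂ ∈ H →
      a Z (g Y₁ Y₂) = g (D'.cov Z Y₁) Y₂ + g Y₁ (D'.cov Z Y₂)) :
    ∃ D : PartialConn C W H a,
      ((∀ Z Y₁ Y₂, Z ∈ H → Y₁ ∈ H → Y₂ ∈ H →
          a Z (g Y₁ Y₂) = g (D.cov Z Y₁) Y₂ + g Y₁ (D.cov Z Y₂)) ∧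
        (∀ X Y, X ∈ H → Y ∈ H → prH (D.cov X Y - D.cov Y X - β X Y) = 0) ∧
        (∀ X Y₁ Y₂, X ∈ H → Y₁ ∈ H → Y₂ ∈ H →
          g (D.cov X Y₁ - D'.cov X Y₁) Y₂ =
            (1 / 2 : ℝ) •
              (- g (prH (D'.cov X Y₁ - D'.cov Y₁ X - β X Y₁)) Y₂
                + g (prH (D'.cov Y₁ Y₂ - D'.cov Y₂ Y₁ - β Y₁ Y₂)) X
                + g (prH (D'.cov X Y₂ - D'.cov Y₂ X - β X Y₂)) Y₁))) ∧
      ∀ D'' : PartialConn C W H a,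
        (∀ Z Y₁ Y₂, Z ∈ H → Y₁ ∈ H → Y₂ ∈ H →
          a Z (g Y₁ Y₂) = g (D''.cov Z Y₁) Y₂ + g Y₁ (D''.cov Z Y₂)) →
        (∀ X Y, X ∈ H → Y ∈ H → prH (D''.cov X Y - D''.cov Y X - β X Y) = 0) →
        ∀ X Y, X ∈ H → Y ∈ H → D''.cov X Y = D.cov X Y :=
  stmt3_general H prH hprH_mem hprH_id a β g hg_symm hg_addl hg_smull hg_nondeg n e he horth hspan
    hβ_anti hβ_add₁ hβ_leib D' hD'compat
end

section
/- Let Ric : T_xM → T_xM be a linear map vanishing on V_x and with image in H_x (where T_xM = H_x ⊕ V_x), and let A_t be a (pathwise continuous, finite-variation-plus-martingale) family of endomorphisms with A_t(H_x) ⊆ V_x, A_t(V_x) = 0, A_0 = 0. Let Q_t solve dQ_t = −½ Ric_t Q_t dt, Q_0 = id, where Ric_t = ∥_t^{-1} Ric ∥_t preserves the same structure, and let Q̂_t solve dQ̂_t = −½(id − A_t) Ric_t (id + A_t) Q̂_t dt, Q̂_0 = id. Then (id + A_t)Q̂_t = Q_t + ∫₀^t dA_r Q_r and ((id + A_t)Q̂_t)^{-1}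 = Q_t^{-1} − ∫₀^t dA_r Q_r Q_t^{-1}. -/
open ContinuousLinearMap

/-!
Both `(id + A_t) Q̂_t` and `Q_t + ∫₀ᵗ dA_r Q_r` solve the linear equation
`dX_t = (dA_t - ½ Ric_t dt) X_t` with `X_0 = id`, hence coincide. The computation rests on one
observation: operators that map into `V` and vanish on `V` (here `A_t`, `A'_t`, and
`∫₀ᵗ dA_r Q_r`, because `Q_t` fixes `V` pointwise) annihilate each other and are annihilated by
`Ric_t`; in particular `(id + A_t)(id - A_t) = id`. The same observation, with `N = ∫₀ᵗ dA_r Q_r`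
and `Q_t N = N`, gives `(Q_t + N)⁻¹ = Q_t⁻¹ - N Q_t⁻¹`.
-/

open Set

section LinearODE

variable {F : Type*} [NormedAddCommGroup F] [NormedSpace ℝ F]

theorem ODE_solution_unique_of_linear {L : ℝ → F →L[ℝ] F} (hL : Continuous L) {f g : ℝ → F}
    (hf : ∀ t, HasDerivAt f (L t (f t)) t) (hg : ∀ t, HasDerivAt g (L t (g t)) t)
    (h0 : f 0 = g 0) : f = g := by
  funext t
  set b := |t| + 1
  obtain ⟨C, hC⟩ := (isCompact_Icc (a := -b) (b := b)).exists_bound_of_continuousOn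
    hL.continuousOn
  have hlip : ∀ s ∈ Ioo (-b) b, LipschitzOnWith C.toNNReal (L s) univ := fun s hs =>
    (lipschitzWith_of_opNorm_le <| (hC s (Ioo_subset_Icc_self hs)).trans
      (Real.le_coe_toNNReal C)).lipschitzOnWith
  have hb : 0 < b := by positivity
  refine ODE_solution_unique_of_mem_Icc hlip ⟨neg_lt_zero.2 hb, hb⟩
    (HasDerivAt.continuousOn fun s _ => hf s) (fun s _ => hf s) (fun _ _ => mem_univ _)
    (HasDerivAt.continuousOn fun s _ => hg s) (fun s _ => hg s) (fun _ _ => mem_univ _) h0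
    ⟨?_, ?_⟩ <;> linarith [neg_abs_le t, le_abs_self t]

theorem HasDerivAt.mem_of_forall_mem {K : Submodule ℝ F} (hK : IsClosed (K : Set F))
    {f : ℝ → F} {f' : F} {t : ℝ} (hf : HasDerivAt f f' t) (hfK : ∀ s, f s ∈ K) : f' ∈ K :=
  hK.mem_of_tendsto (hasDerivAt_iff_tendsto_slope.mp hf) <| Filter.Eventually.of_forall
    fun s => by
      rw [slope_def_module]
      exact K.smul_mem _ (K.sub_mem (hfK s) (hfK t))

theorem intervalIntegral_mem_of_forall_mem [CompleteSpace F] {K : Submodule ℝ F}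
    (hK : IsClosed (K : Set F)) {f : ℝ → F} (hf : Continuous f) (hfK : ∀ s, f s ∈ K)
    (a b : ℝ) : ∫ s in a..b, f s ∈ K := by
  have := hK.completeSpace_coe
  let g : ℝ → K := fun s => ⟨f s, hfK s⟩
  have hg : Continuous g := hf.subtype_mk hfK
  have := K.subtypeL.intervalIntegral_comp_comm (μ := MeasureTheory.volume)
    (hg.intervalIntegrable a b)
  exact this ▸ (∫ s in a..b, g s).2

end LinearODE

section SquareZero

variable {R : Type*} [Ring R]

theorem one_add_mul_one_sub_of_mul_self_eq_zero {a : R} (ha : a * a = 0) :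
    (1 + a) * (1 - a) = 1 := by
  noncomm_ring
  simp [ha]

theorem add_mul_sub_mul_eq_one {q q' n : R} (hq : q * q' = 1) (hn : n * n = 0)
    (hqn : q * n = n) : (q + n) * (q' - n * q') = 1 := by
  calc (q + n) * (q' - n * q') = q * q' + n * q' - q * n * q' - n * n * q' := by noncomm_ring
    _ = 1 := by rw [hq, hqn, hn, zero_mul, sub_zero, add_sub_cancel_right]

theorem sub_mul_mul_add_eq_one {q q' n : R} (hq : q' * q = 1) (hn : n * n = 0)
    (hqn : q * n = n) : (q' - n * q') * (q + n) = 1 := by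
  have hq'n : q' * n = n := by simpa [← mul_assoc, hq] using (congrArg (q' * ·) hqn).symm
  calc (q' - n * q') * (q + n) = q' * q + q' * n - n * (q' * q) - n * (q' * n) := by
        noncomm_ring
    _ = 1 := by rw [hq, hq'n, hn, mul_one, sub_zero, add_sub_cancel_right]

end SquareZero

section RangeLeLeKer

variable {𝕜 E : Type*} [NontriviallyNormedField 𝕜] [NormedAddCommGroup E] [NormedSpace 𝕜 E]

def rangeLeLeKer (V : Submodule 𝕜 E) : Submodule 𝕜 (E →L[𝕜] E) where
  carrier := {T | (∀ x, T x ∈ V) ∧ ∀ v ∈ V, T v = 0}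
  add_mem' hT hU := ⟨fun x => V.add_mem (hT.1 x) (hU.1 x), fun v hv => by
    simp [hT.2 v hv, hU.2 v hv]⟩
  zero_mem' := ⟨fun _ => V.zero_mem, fun _ _ => rfl⟩
  smul_mem' c T hT := ⟨fun x => V.smul_mem c (hT.1 x), fun v hv => by simp [hT.2 v hv]⟩

variable {V : Submodule 𝕜 E} {T U : E →L[𝕜] E}

namespace rangeLeLeKer

theorem mul_eq_zero_of_ker (hT : T ∈ rangeLeLeKer V) (hU : ∀ v ∈ V, U v = 0) : U * T = 0 :=
  ext fun x => hU _ (hT.1 x)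

theorem mul_eq_zero (hT : T ∈ rangeLeLeKer V) (hU : U ∈ rangeLeLeKer V) : U * T = 0 :=
  mul_eq_zero_of_ker hT hU.2

theorem mul_eq_self (hT : T ∈ rangeLeLeKer V) (hU : ∀ v ∈ V, U v = v) : U * T = T :=
  ext fun x => hU _ (hT.1 x)

theorem mul_mem (hT : T ∈ rangeLeLeKer V) (hU : ∀ v ∈ V, U v = v) :
    T * U ∈ rangeLeLeKer V :=
  ⟨fun x => hT.1 (U x), fun v hv => by simp [mul_def, hU v hv, hT.2 v hv]⟩

theorem of_isCompl {H : Submodule 𝕜 E} (hHV : IsCompl H V) (hTH : ∀ h ∈ H, T h ∈ V)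
    (hTV : ∀ v ∈ V, T v = 0) : T ∈ rangeLeLeKer V := by
  refine ⟨fun x => ?_, hTV⟩
  obtain ⟨h, v, hh, hv, rfl⟩ := Submodule.codisjoint_iff_exists_add_eq.mp hHV.codisjoint x
  rw [map_add, hTV v hv, add_zero]
  exact hTH h hh

theorem isClosed (hV : IsClosed (V : Set E)) : IsClosed (rangeLeLeKer V : Set (E →L[𝕜] E)) := by
  have : (rangeLeLeKer V : Set (E →L[𝕜] E)) =
      (⋂ x, (fun T : E →L[𝕜] E => T x) ⁻¹' V) ∩ ⋂ v ∈ V, {T | T v = 0} := by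
    ext T; simp [rangeLeLeKer]
  rw [this]
  exact (isClosed_iInter fun x => hV.preimage (apply 𝕜 E x).continuous).inter
    (isClosed_biInter fun v _ => isClosed_eq (apply 𝕜 E v).continuous continuous_const)

end rangeLeLeKer

end RangeLeLeKer

section Operators

variable {E : Type*} [NormedAddCommGroup E] [NormedSpace ℝ E]

theorem HasDerivAt.clm_mul {c d : ℝ → E →L[ℝ] E} {c' d' : E →L[ℝ] E} {t : ℝ}
    (hc : HasDerivAt c c' t) (hd : HasDerivAt d d' t) :
    HasDerivAt (fun s => c s * d s) (c' * d t + c t * d') t :=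
  hc.clm_comp hd

theorem apply_eq_self_of_hasDerivAt_mul {L Q : ℝ → E →L[ℝ] E} (hL : Continuous L)
    (hQ : ∀ t, HasDerivAt Q (L t * Q t) t) (hQ0 : Q 0 = 1) {v : E} (hv : ∀ t, L t v = 0)
    (t : ℝ) : Q t v = v := by
  have hQv : ∀ t, HasDerivAt (fun s => Q s v) (L t (Q t v)) t := fun t => by
    simpa using (hQ t).clm_apply (hasDerivAt_const t v)
  have hv' : ∀ t, HasDerivAt (fun _ => v) (L t v) t := fun t => by
    simpa [hv t] using hasDerivAt_const t v
  exact congrFun (ODE_solution_unique_of_linear hL hQv hv' (by simp [hQ0])) t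

theorem hasDerivAt_one_add_mul_of_conj {A Qh : ℝ → E →L[ℝ] E} {A' R : E →L[ℝ] E} {t : ℝ}
    (hA : HasDerivAt A A' t) (hAA : A t * A t = 0) (hA'A : A' * A t = 0)
    (hQh : HasDerivAt Qh (-(1 / 2 : ℝ) • ((1 - A t) * (R * ((1 + A t) * Qh t)))) t) :
    HasDerivAt (fun s => (1 + A s) * Qh s) ((A' - (1 / 2 : ℝ) • R) * ((1 + A t) * Qh t)) t := by
  refine ((hA.const_add 1).clm_mul hQh).congr_deriv ?_
  rw [mul_smul_comm, ← mul_assoc (1 + A t), one_add_mul_one_sub_of_mul_self_eq_zero hAA,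
    one_mul, sub_mul, smul_mul_assoc, ← mul_assoc A', mul_add, mul_one, hA'A, add_zero]
  module

theorem hasDerivAt_add_of_mul_eq_zero {Q I : ℝ → E →L[ℝ] E} {A' R : E →L[ℝ] E} {t : ℝ}
    (hQ : HasDerivAt Q (-(1 / 2 : ℝ) • (R * Q t)) t) (hI : HasDerivAt I (A' * Q t) t)
    (hA'I : A' * I t = 0) (hRI : R * I t = 0) :
    HasDerivAt (fun s => Q s + I s) ((A' - (1 / 2 : ℝ) • R) * (Q t + I t)) t := by
  refine (hQ.add hI).congr_deriv ?_
  rw [mul_add, sub_mul, sub_mul, smul_mul_assoc, smul_mul_assoc, hA'I, hRI]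
  module

end Operators

theorem stmt10_general {E : Type*} [NormedAddCommGroup E] [NormedSpace ℝ E]
    [FiniteDimensional ℝ E]
    (Hs Vs : Submodule ℝ E) (hcompl : IsCompl Hs Vs)
    (Ric : ℝ → E →L[ℝ] E) (hRic_cont : Continuous Ric)
    (hRicV : ∀ t, ∀ v ∈ Vs, Ric t v = 0)
    (A A' : ℝ → E →L[ℝ] E)
    (hA : ∀ t, HasDerivAt A (A' t) t) (hA'_cont : Continuous A')
    (hA0 : A 0 = 0)
    (hAH : ∀ t, ∀ h ∈ Hs, A t h ∈ Vs)
    (hAV : ∀ t, ∀ v ∈ Vs, A t v = 0)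
    (Q Qh : ℝ → E →L[ℝ] E)
    (hQ0 : Q 0 = ContinuousLinearMap.id ℝ E)
    (hQ : ∀ t, HasDerivAt Q (-(1 / 2 : ℝ) • (Ric t).comp (Q t)) t)
    (hQh0 : Qh 0 = ContinuousLinearMap.id ℝ E)
    (hQh : ∀ t, HasDerivAt Qh (-(1 / 2 : ℝ) •
      ((ContinuousLinearMap.id ℝ E - A t).comp
        ((Ric t).comp ((ContinuousLinearMap.id ℝ E + A t).comp (Qh t))))) t)
    (Qinv : ℝ → E →L[ℝ] E)
    (hQinv : ∀ t, (Qinv t).comp (Q t) = ContinuousLinearMap.id ℝ E ∧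
      (Q t).comp (Qinv t) = ContinuousLinearMap.id ℝ E) :
    ∀ t,
      ((ContinuousLinearMap.id ℝ E + A t).comp (Qh t)
          = Q t + ∫ r in (0:ℝ)..t, (A' r).comp (Q r)) ∧
      ((ContinuousLinearMap.id ℝ E + A t).comp (Qh t)).comp
          (Qinv t - (∫ r in (0:ℝ)..t, (A' r).comp (Q r)).comp (Qinv t))
        = ContinuousLinearMap.id ℝ E ∧
      (Qinv t - (∫ r in (0:ℝ)..t, (A' r).comp (Q r)).comp (Qinv t)).comp
          ((ContinuousLinearMap.id ℝ E + A t).comp (Qh t))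
        = ContinuousLinearMap.id ℝ E := by
  simp only [← mul_def, ← one_def] at hQ0 hQ hQh0 hQh hQinv ⊢
  have hS : IsClosed (rangeLeLeKer Vs : Set (E →L[ℝ] E)) :=
    rangeLeLeKer.isClosed Vs.closed_of_finiteDimensional
  have hAS t : A t ∈ rangeLeLeKer Vs := rangeLeLeKer.of_isCompl hcompl (hAH t) (hAV t)
  have hA'S t : A' t ∈ rangeLeLeKer Vs := (hA t).mem_of_forall_mem hS hAS
  have hQV t : ∀ v ∈ Vs, Q t v = v := fun v hv =>
    apply_eq_self_of_hasDerivAt_mul (L := fun t => -(1 / 2 : ℝ) • Ric t) (by fun_prop)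
      (fun t => by simpa only [smul_mul_assoc] using hQ t) hQ0
      (fun t => by simp [hRicV t v hv]) t
  set I := fun t => ∫ r in (0:ℝ)..t, A' r * Q r
  have hQc : Continuous Q := continuous_iff_continuousAt.2 fun t => (hQ t).continuousAt
  have hIc : Continuous fun r => A' r * Q r := hA'_cont.clm_comp hQc
  have hIS t : I t ∈ rangeLeLeKer Vs :=
    intervalIntegral_mem_of_forall_mem hS hIc (fun r => rangeLeLeKer.mul_mem (hA'S r) (hQV r)) 0 t
  have hX t := hasDerivAt_one_add_mul_of_conj (hA t)
    (rangeLeLeKer.mul_eq_zero (hAS t) (hAS t)) (rangeLeLeKer.mul_eq_zero (hAS t) (hA'S t))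
    (hQh t)
  have hY t := hasDerivAt_add_of_mul_eq_zero (hQ t) (hIc.integral_hasStrictDerivAt 0 t).hasDerivAt
    (rangeLeLeKer.mul_eq_zero (hIS t) (hA'S t)) (rangeLeLeKer.mul_eq_zero_of_ker (hIS t) (hRicV t))
  have hXY := ODE_solution_unique_of_linear
    ((mul ℝ (E →L[ℝ] E)).continuous.comp (hA'_cont.sub (by fun_prop))) hX hY
    (by simp [hA0, hQh0, hQ0])
  intro t
  have hXt : (1 + A t) * Qh t = Q t + I t := congrFun hXY t
  have hII := rangeLeLeKer.mul_eq_zero (hIS t) (hIS t)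
  have hQI := rangeLeLeKer.mul_eq_self (hIS t) (hQV t)
  exact ⟨hXt, hXt ▸ add_mul_sub_mul_eq_one (hQinv t).2 hII hQI,
    hXt ▸ sub_mul_mul_add_eq_one (hQinv t).1 hII hQI⟩

/-- **Conversion formula `(id + A_t)Q̂_t = Q_t + ∫₀ᵗ dA_r Q_r` and its inverse.**
Pathwise (deterministic) version in `T_xM = H ⊕ V` finite dimensional: `Ric_t`
vanishes on `V` with image in `H`; `A_t` maps `H` into `V` and annihilates `V`,
`A_0 = 0` (a pathwise differentiable path with derivative `A'`); `Q` and `Q̂`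
solve `dQ_t = −½ Ric_t Q_t dt`, `Q_0 = id`, and
`dQ̂_t = −½ (id−A_t) Ric_t (id+A_t) Q̂_t dt`, `Q̂_0 = id`.  Then
`(id + A_t)Q̂_t = Q_t + ∫₀ᵗ dA_r Q_r` and
`((id + A_t)Q̂_t)^{-1} = Q_t^{-1} − (∫₀ᵗ dA_r Q_r) Q_t^{-1}`. -/
theorem stmt10 {E : Type*} [NormedAddCommGroup E] [NormedSpace ℝ E]
    [FiniteDimensional ℝ E]
    (Hs Vs : Submodule ℝ E) (hcompl : IsCompl Hs Vs)
    (Ric : ℝ → E →L[ℝ] E) (hRic_cont : Continuous Ric)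
    (hRicV : ∀ t, ∀ v ∈ Vs, Ric t v = 0)
    (hRicH : ∀ t x, Ric t x ∈ Hs)
    (A A' : ℝ → E →L[ℝ] E)
    (hA : ∀ t, HasDerivAt A (A' t) t) (hA'_cont : Continuous A')
    (hA0 : A 0 = 0)
    (hAH : ∀ t, ∀ h ∈ Hs, A t h ∈ Vs)
    (hAV : ∀ t, ∀ v ∈ Vs, A t v = 0)
    (Q Qh : ℝ → E →L[ℝ] E)
    (hQ0 : Q 0 = ContinuousLinearMap.id ℝ E)
    (hQ : ∀ t, HasDerivAt Q (-(1 / 2 : ℝ) • (Ric t).comp (Q t)) t)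
    (hQh0 : Qh 0 = ContinuousLinearMap.id ℝ E)
    (hQh : ∀ t, HasDerivAt Qh (-(1 / 2 : ℝ) •
      ((ContinuousLinearMap.id ℝ E - A t).comp
        ((Ric t).comp ((ContinuousLinearMap.id ℝ E + A t).comp (Qh t))))) t)
    (Qinv : ℝ → E →L[ℝ] E)
    (hQinv : ∀ t, (Qinv t).comp (Q t) = ContinuousLinearMap.id ℝ E ∧
      (Q t).comp (Qinv t) = ContinuousLinearMap.id ℝ E) :
    ∀ t,
      ((ContinuousLinearMap.id ℝ E + A t).comp (Qh t)
          = Q t + ∫ r in (0:ℝ)..t, (A' r).comp (Q r)) ∧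
      ((ContinuousLinearMap.id ℝ E + A t).comp (Qh t)).comp
          (Qinv t - (∫ r in (0:ℝ)..t, (A' r).comp (Q r)).comp (Qinv t))
        = ContinuousLinearMap.id ℝ E ∧
      (Qinv t - (∫ r in (0:ℝ)..t, (A' r).comp (Q r)).comp (Qinv t)).comp
          ((ContinuousLinearMap.id ℝ E + A t).comp (Qh t))
        = ContinuousLinearMap.id ℝ E :=
  stmt10_general Hs Vs hcompl Ric hRic_cont hRicV A A' hA hA'_cont hA0 hAH hAV Q Qh hQ0 hQ hQh0 hQh
    Qinv hQinv
end

section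
/- Let ∇ be an affine connection on M with torsion T and curvature R such that a subbundle H with metric g is parallel. Define q_Z : H → H by ⟨q_Z v₁, v₂⟩_g = ½(∇_Z g)(v₁,v₂), Ric(Z) = −tr_H R(×,Z)×, δ_H T(Z) = −tr_H (∇_× T)(×,Z). Then for every smooth function f and vector field Z: L df(Z) − dLf(Z) = −2 tr_H ∇_× df(T(×,Z) − q_Z ×) + df(Ric(Z) + δ_H T(Z) − tr_H T(×,T(×,Z))), where L = tr_H ∇²_{×,×}. -/
namespace Stmt12

variable {C W : Type*} [CommRing C] [AddCommGroup W] [Module C W]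

/-- Torsion `T(X,Y) = ∇_X Y − ∇_Y X − [X,Y]`. -/
def tor (β D : W → W → W) (X Y : W) : W := D X Y - D Y X - β X Y

/-- Curvature `R(X,Y)Z = ∇_X∇_Y Z − ∇_Y∇_X Z − ∇_{[X,Y]}Z`. -/
def curv (β D : W → W → W) (X Y Z : W) : W := D X (D Y Z) - D Y (D X Z) - D (β X Y) Z

/-- `(∇_Y df)(Z) = Y(Zf) − (∇_Y Z)f`. -/
def cov1 (a : W → C → C) (D : W → W → W) (f : C) (Y Z : W) : C :=
  a Y (a Z f) - a (D Y Z) f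

/-- `(∇²_{X,Y} df)(Z) = X((∇_Y df)(Z)) − (∇_Y df)(∇_X Z) − (∇_{∇_X Y} df)(Z)`. -/
def hess (a : W → C → C) (D : W → W → W) (f : C) (X Y Z : W) : C :=
  a X (cov1 a D f Y Z) - cov1 a D f Y (D X Z) - cov1 a D f (D X Y) Z

/-- The connection sub-Laplacian `L f = tr_H ∇²_{×,×} f` on functions. -/
def subLap (a : W → C → C) (D : W → W → W) {n : ℕ} (e : Fin n → W) (f : C) : C :=
  ∑ i, (a (e i) (a (e i) f) - a (D (e i) (e i)) f)

/-- `Ric(Z) = − tr_H R(×,Z)×`. -/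
def ric (β D : W → W → W) {n : ℕ} (e : Fin n → W) (Z : W) : W :=
  - ∑ i, curv β D (e i) Z (e i)

/-- `δ_H T(Z) = − tr_H (∇_× T)(×,Z)`. -/
def deltaT (β D : W → W → W) {n : ℕ} (e : Fin n → W) (Z : W) : W :=
  - ∑ i, (D (e i) (tor β D (e i) Z) - tor β D (D (e i) (e i)) Z
      - tor β D (e i) (D (e i) Z))

end Stmt12

open Stmt12

/-- **General Weitzenböck formula (Lemma A.1, \eqref{GenWeitzNabla}).**
Algebraic model of `(M,H,g)` with an affine connection `∇` preserving `H`: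
`C` = smooth functions, `W` = vector fields with bracket `β` and action `a`,
`e` an orthonormal frame of the submodule `H` (so `tr_H` = sum over the frame),
and `q_Z : H → H` the tensor `⟨q_Z v₁,v₂⟩ = ½(∇_Z g)(v₁,v₂)`, recorded by its
frame coefficients `q Z i j = ⟨q_Z e_i, e_j⟩`.  Then for every function `f` and
vector field `Z`:
`L df(Z) − dLf(Z) = −2 tr_H ∇_× df(T(×,Z) − q_Z ×)`
`  + df(Ric(Z) + δ_H T(Z) − tr_H T(×, T(×,Z)))`. -/
theorem stmt12 {C W : Type*} [CommRing C] [Algebra ℝ C] [AddCommGroup W] [Module C W]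
    (a : W → C → C) (β : W → W → W) (D : W → W → W) (g : W → W → C)
    (ha_add₁ : ∀ X Y c, a (X + Y) c = a X c + a Y c)
    (ha_smul₁ : ∀ (f : C) X c, a (f • X) c = f * a X c)
    (ha_add₂ : ∀ X c c', a X (c + c') = a X c + a X c')
    (ha_mul : ∀ X c c', a X (c * c') = a X c * c' + c * a X c')
    (hβ_anti : ∀ X Y, β X Y = - β Y X)
    (hβ_add₁ : ∀ X Y Z, β (X + Y) Z = β X Z + β Y Z)
    (hβ_leib : ∀ X (f : C) Y, β X (f • Y) = a X f • Y + f • β X Y)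
    (hβ_act : ∀ X Y c, a (β X Y) c = a X (a Y c) - a Y (a X c))
    (hβ_jac : ∀ X Y Z, β X (β Y Z) + β Y (β Z X) + β Z (β X Y) = 0)
    (hD_add₁ : ∀ X Y Z, D (X + Y) Z = D X Z + D Y Z)
    (hD_smul₁ : ∀ (f : C) X Y, D (f • X) Y = f • D X Y)
    (hD_add₂ : ∀ X Y Z, D X (Y + Z) = D X Y + D X Z)
    (hD_leib : ∀ X (f : C) Y, D X (f • Y) = a X f • Y + f • D X Y)
    (hg_symm : ∀ v w, g v w = g w v)
    (hg_addl : ∀ u v w, g (u + v) w = g u w + g v w)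
    (hg_smull : ∀ (c : C) v w, g (c • v) w = c * g v w)
    (Hs : Submodule C W)
    (n : ℕ) (e : Fin n → W) (he : ∀ i, e i ∈ Hs)
    (horth : ∀ i j, g (e i) (e j) = if i = j then 1 else 0)
    (hspan : ∀ w ∈ Hs, ∃ c : Fin n → C, w = ∑ i, c i • e i)
    (hpar : ∀ Z Y, Y ∈ Hs → D Z Y ∈ Hs)
    (q : W → Fin n → Fin n → C)
    (hq : ∀ Z i j, q Z i j = (1 / 2 : ℝ) •
      (a Z (g (e i) (e j)) - g (D Z (e i)) (e j) - g (e i) (D Z (e j))))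
    (f : C) (Z : W) :
    (∑ i, hess a D f (e i) (e i) Z) - a Z (subLap a D e f)
      = - (2 : C) * (∑ i, (cov1 a D f (e i) (tor β D (e i) Z)
            - ∑ j, q Z i j * cov1 a D f (e i) (e j)))
        + a (ric β D e Z + deltaT β D e Z
            - ∑ i, tor β D (e i) (tor β D (e i) Z)) f := by
  classical
  -- basic derived linearity facts
  have ha0₁ : ∀ c, a 0 c = 0 := fun c => by
    have h := ha_add₁ 0 0 c; simpa using h
  have ha_neg₁ : ∀ X c, a (-X) c = - a X c := fun X c => by
    have h := ha_add₁ X (-X) c; simp [ha0₁] at h; linear_combination -h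
  have ha_sub₁ : ∀ X Y c, a (X - Y) c = a X c - a Y c := fun X Y c => by
    rw [sub_eq_add_neg, ha_add₁, ha_neg₁]; ring
  have ha0₂ : ∀ X, a X (0:C) = 0 := fun X => by
    have h := ha_add₂ X 0 0; simpa using h
  have ha1₂ : ∀ X, a X (1:C) = 0 := fun X => by
    have h := ha_mul X 1 1
    simp only [mul_one, one_mul] at h
    linear_combination -h
  have ha_neg₂ : ∀ X c, a X (-c) = - a X c := fun X c => by
    have h := ha_add₂ X c (-c); simp [ha0₂] at h; linear_combination -h
  have ha_sub₂ : ∀ X c c', a X (c - c') = a X c - a X c' := fun X c c' => by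
    rw [sub_eq_add_neg, ha_add₂, ha_neg₂]; ring
  have hD0₁ : ∀ Y, D 0 Y = 0 := fun Y => by
    have h := hD_add₁ 0 0 Y; simpa using h
  have hD_neg₁ : ∀ X Y, D (-X) Y = - D X Y := fun X Y => by
    have h := hD_add₁ X (-X) Y; simp [hD0₁] at h
    exact eq_neg_of_add_eq_zero_right h.symm
  have hD_sub₁ : ∀ X Y Z, D (X - Y) Z = D X Z - D Y Z := fun X Y Z => by
    rw [sub_eq_add_neg, hD_add₁, hD_neg₁, sub_eq_add_neg]
  have hD0₂ : ∀ X, D X 0 = 0 := fun X => by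
    have h := hD_add₂ X 0 0; simpa using h
  have hD_neg₂ : ∀ X Y, D X (-Y) = - D X Y := fun X Y => by
    have h := hD_add₂ X Y (-Y); simp [hD0₂] at h
    exact eq_neg_of_add_eq_zero_right h.symm
  have hD_sub₂ : ∀ X Y Z, D X (Y - Z) = D X Y - D X Z := fun X Y Z => by
    rw [sub_eq_add_neg, hD_add₂, hD_neg₂, sub_eq_add_neg]
  -- sums
  have ha_sum₁ : ∀ (v : Fin n → W) c, a (∑ i, v i) c = ∑ i, a (v i) c := fun v c =>
    map_sum (AddMonoidHom.mk' (fun X => a X c) (fun X Y => ha_add₁ X Y c)) v Finset.univ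
  have ha_sum₂ : ∀ X (v : Fin n → C), a X (∑ i, v i) = ∑ i, a X (v i) := fun X v =>
    map_sum (AddMonoidHom.mk' (a X) (ha_add₂ X)) v Finset.univ
  have g_sum₁ : ∀ (v : Fin n → W) w, g (∑ i, v i) w = ∑ i, g (v i) w := fun v w =>
    map_sum (AddMonoidHom.mk' (fun u => g u w) (fun x y => hg_addl x y w)) v Finset.univ
  -- cov1 linearity
  have cov1_smul₂ : ∀ (c : C) X Y, cov1 a D f X (c • Y) = c * cov1 a D f X Y := by
    intro c X Y
    simp only [cov1, hD_leib, ha_smul₁, ha_add₁, ha_mul]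
    ring
  have cov1_smul₁ : ∀ (c : C) X Y, cov1 a D f (c • X) Y = c * cov1 a D f X Y := by
    intro c X Y
    simp only [cov1, hD_smul₁, ha_smul₁]
    ring
  have cov1_add₂ : ∀ X Y Y', cov1 a D f X (Y + Y') = cov1 a D f X Y + cov1 a D f X Y' := by
    intro X Y Y'
    simp only [cov1, hD_add₂, ha_add₁, ha_add₂]
    ring
  have cov1_add₁ : ∀ X X' Y, cov1 a D f (X + X') Y = cov1 a D f X Y + cov1 a D f X' Y := by
    intro X X' Y
    simp only [cov1, hD_add₁, ha_add₁]
    ring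
  have cov1_sum₂ : ∀ X (v : Fin n → W),
      cov1 a D f X (∑ j, v j) = ∑ j, cov1 a D f X (v j) := fun X v =>
    map_sum (AddMonoidHom.mk' (cov1 a D f X) (cov1_add₂ X)) v Finset.univ
  have cov1_sum₁ : ∀ (v : Fin n → W) Y,
      cov1 a D f (∑ j, v j) Y = ∑ j, cov1 a D f (v j) Y := fun v Y =>
    map_sum (AddMonoidHom.mk' (fun X => cov1 a D f X Y)
      (fun X X' => cov1_add₁ X X' Y)) v Finset.univ
  -- representation of elements of H in the orthonormal frame
  have g_rep : ∀ (c : Fin n → C) j, g (∑ k, c k • e k) (e j) = c j := by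
    intro c j
    rw [g_sum₁]
    simp [hg_smull, horth]
  have hrep : ∀ i, D Z (e i) = ∑ j, g (D Z (e i)) (e j) • e j := by
    intro i
    obtain ⟨c, hc⟩ := hspan _ (hpar Z _ (he i))
    conv_lhs => rw [hc]
    refine Finset.sum_congr rfl fun j _ => ?_
    rw [hc, g_rep]
  -- the coefficient identity for q
  have h2q : ∀ i j, 2 * q Z i j
      = -(g (D Z (e i)) (e j) + g (D Z (e j)) (e i)) := by
    intro i j
    have hz : a Z (g (e i) (e j)) = 0 := by
      rw [horth]
      split <;> simp [ha1₂, ha0₂]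
    rw [hq, hz, hg_symm (e i) (D Z (e j))]
    set x : C := (0:C) - g (D Z (e i)) (e j) - g (D Z (e j)) (e i) with hx
    have hhalf : (1/2 : ℝ) • x + (1/2 : ℝ) • x = x := by
      rw [← add_smul]; norm_num
    linear_combination hhalf
  -- the key pointwise Weitzenböck identity
  have key : ∀ X : W,
      hess a D f X X Z - a Z (a X (a X f) - a (D X X) f)
        = -2 * cov1 a D f X (tor β D X Z)
          - (cov1 a D f X (D Z X) + cov1 a D f (D Z X) X)
          - a (curv β D X Z X) f
          - a (D X (tor β D X Z) - tor β D (D X X) Z - tor β D X (D X Z)) f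
          - a (tor β D X (tor β D X Z)) f := by
    intro X
    simp only [hess, cov1, tor, curv, hD_sub₂, hD_sub₁, hD_add₂, hD_add₁,
      ha_sub₁, ha_add₁, ha_sub₂, ha_add₂, hβ_act, hD_neg₂, hD_neg₁, ha_neg₁, ha_neg₂]
    ring
  -- the q-term matches the parallel-transport defect
  have qsum : ∑ i, ∑ j, (2 * q Z i j) * cov1 a D f (e i) (e j)
      = ∑ i, (-(cov1 a D f (e i) (D Z (e i))) - cov1 a D f (D Z (e i)) (e i)) := by
    have lhs_eq : ∑ i, ∑ j, (2 * q Z i j) * cov1 a D f (e i) (e j)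
        = ∑ i, ((∑ j, -(g (D Z (e i)) (e j) * cov1 a D f (e i) (e j)))
            + ∑ j, -(g (D Z (e j)) (e i) * cov1 a D f (e i) (e j))) := by
      refine Finset.sum_congr rfl fun i _ => ?_
      rw [← Finset.sum_add_distrib]
      refine Finset.sum_congr rfl fun j _ => ?_
      rw [h2q]; ring
    rw [lhs_eq, Finset.sum_add_distrib]
    have e2 : ∑ i, ∑ j, -(g (D Z (e j)) (e i) * cov1 a D f (e i) (e j))
        = ∑ i, ∑ j, -(g (D Z (e i)) (e j) * cov1 a D f (e j) (e i)) :=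
      Finset.sum_comm
    rw [e2, ← Finset.sum_add_distrib]
    refine Finset.sum_congr rfl fun i _ => ?_
    have r1 : cov1 a D f (e i) (D Z (e i))
        = ∑ j, g (D Z (e i)) (e j) * cov1 a D f (e i) (e j) := by
      conv_lhs => rw [hrep i]
      rw [cov1_sum₂]
      exact Finset.sum_congr rfl fun j _ => cov1_smul₂ _ _ _
    have r2 : cov1 a D f (D Z (e i)) (e i)
        = ∑ j, g (D Z (e i)) (e j) * cov1 a D f (e j) (e i) := by
      conv_lhs => rw [hrep i]
      rw [cov1_sum₁]
      exact Finset.sum_congr rfl fun j _ => cov1_smul₁ _ _ _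
    rw [r1, r2, Finset.sum_neg_distrib, Finset.sum_neg_distrib]
    ring
  -- assemble
  have step1 : (∑ i, hess a D f (e i) (e i) Z) - a Z (subLap a D e f)
      = ∑ i, (hess a D f (e i) (e i) Z
          - a Z (a (e i) (a (e i) f) - a (D (e i) (e i)) f)) := by
    rw [subLap, ha_sum₂, Finset.sum_sub_distrib]
  have step2 : ∑ i, (hess a D f (e i) (e i) Z
        - a Z (a (e i) (a (e i) f) - a (D (e i) (e i)) f))
      = ∑ i, (-2 * cov1 a D f (e i) (tor β D (e i) Z)
          - a (curv β D (e i) Z (e i)) f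
          - a (D (e i) (tor β D (e i) Z) - tor β D (D (e i) (e i)) Z
              - tor β D (e i) (D (e i) Z)) f
          - a (tor β D (e i) (tor β D (e i) Z)) f)
        + ∑ i, (-(cov1 a D f (e i) (D Z (e i))) - cov1 a D f (D Z (e i)) (e i)) := by
    rw [← Finset.sum_add_distrib]
    refine Finset.sum_congr rfl fun i _ => ?_
    rw [key (e i)]; ring
  rw [step1, step2, ← qsum]
  simp only [ric, deltaT, ha_sub₁, ha_add₁, ha_neg₁, ha_sum₁,
    Finset.sum_sub_distrib, Finset.mul_sum, mul_sub, neg_mul, mul_neg, neg_neg,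
    mul_assoc, Finset.sum_neg_distrib]
  ring
end

section
/- With ∇, H, g, T, R, q, Ric as above and ∇̂ the adjoint connection of ∇ with Laplacian L̂ = tr_H ∇̂²_{×,×} on 1-forms and L = tr_H ∇²_{×,×} on functions, one has for every smooth f and vector field Z: L̂ df(Z) − dLf(Z) = 2 tr_H ∇_× df(q_Z ×) + df(Ric(Z)). -/
namespace Stmt13

variable {C W : Type*} [CommRing C] [AddCommGroup W] [Module C W]


variable {C W : Type*} [CommRing C] [AddCommGroup W] [Module C W]

/-- Torsion `T(X,Y) = ∇_X Y − ∇_Y X − [X,Y]`. -/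
def tor (β D : W → W → W) (X Y : W) : W := D X Y - D Y X - β X Y

/-- Curvature `R(X,Y)Z = ∇_X∇_Y Z − ∇_Y∇_X Z − ∇_{[X,Y]}Z`. -/
def curv (β D : W → W → W) (X Y Z : W) : W := D X (D Y Z) - D Y (D X Z) - D (β X Y) Z

/-- `(∇_Y df)(Z) = Y(Zf) − (∇_Y Z)f`. -/
def cov1 (a : W → C → C) (D : W → W → W) (f : C) (Y Z : W) : C :=
  a Y (a Z f) - a (D Y Z) f

/-- `(∇²_{X,Y} df)(Z) = X((∇_Y df)(Z)) − (∇_Y df)(∇_X Z) − (∇_{∇_X Y} df)(Z)`. -/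
def hess (a : W → C → C) (D : W → W → W) (f : C) (X Y Z : W) : C :=
  a X (cov1 a D f Y Z) - cov1 a D f Y (D X Z) - cov1 a D f (D X Y) Z

/-- The connection sub-Laplacian `L f = tr_H ∇²_{×,×} f` on functions. -/
def subLap (a : W → C → C) (D : W → W → W) {n : ℕ} (e : Fin n → W) (f : C) : C :=
  ∑ i, (a (e i) (a (e i) f) - a (D (e i) (e i)) f)

/-- `Ric(Z) = − tr_H R(×,Z)×`. -/
def ric (β D : W → W → W) {n : ℕ} (e : Fin n → W) (Z : W) : W :=
  - ∑ i, curv β D (e i) Z (e i)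

/-- `δ_H T(Z) = − tr_H (∇_× T)(×,Z)`. -/
def deltaT (β D : W → W → W) {n : ℕ} (e : Fin n → W) (Z : W) : W :=
  - ∑ i, (D (e i) (tor β D (e i) Z) - tor β D (D (e i) (e i)) Z
      - tor β D (e i) (D (e i) Z))

end Stmt13

open Stmt13

section AddHom
variable {A B : Type*} [AddCommGroup A] [AddCommGroup B]

lemma addhom_zero' (φ : A → B) (h : ∀ x y, φ (x + y) = φ x + φ y) : φ 0 = 0 := by
  have h0 := h 0 0
  rw [add_zero] at h0
  exact (left_eq_add.mp h0)

lemma addhom_neg' (φ : A → B) (h : ∀ x y, φ (x + y) = φ x + φ y) (x : A) :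
    φ (-x) = - φ x := by
  have h0 := h x (-x)
  rw [add_neg_cancel, addhom_zero' φ h] at h0
  exact (neg_eq_of_add_eq_zero_right h0.symm).symm

lemma addhom_sub' (φ : A → B) (h : ∀ x y, φ (x + y) = φ x + φ y) (x y : A) :
    φ (x - y) = φ x - φ y := by
  rw [sub_eq_add_neg, h, addhom_neg' φ h, sub_eq_add_neg]

lemma addhom_sum' {ι : Type*} (φ : A → B) (h : ∀ x y, φ (x + y) = φ x + φ y)
    (s : Finset ι) (v : ι → A) : φ (∑ i ∈ s, v i) = ∑ i ∈ s, φ (v i) := by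
  induction s using Finset.cons_induction with
  | empty => simpa using addhom_zero' φ h
  | cons i s hi ih => rw [Finset.sum_cons, Finset.sum_cons, h, ih]

end AddHom

lemma perpoint {C W : Type*} [CommRing C] [AddCommGroup W] [Module C W]
    (a : W → C → C) (β D : W → W → W)
    (ha_add₁ : ∀ X Y c, a (X + Y) c = a X c + a Y c)
    (ha_add₂ : ∀ X c c', a X (c + c') = a X c + a X c')
    (hβ_act : ∀ X Y c, a (β X Y) c = a X (a Y c) - a Y (a X c))
    (hD_add₁ : ∀ X Y Z, D (X + Y) Z = D X Z + D Y Z)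
    (f : C) (X Z : W) (hXX : β X X = 0) :
    hess a (fun U V => D U V - tor β D U V) f X X Z
      - a Z (a X (a X f) - a (D X X) f)
      + a (curv β D X Z X) f
    = a (D X (D Z X)) f + a (D (D Z X) X) f
      - a X (a (D Z X) f) - a (D Z X) (a X f) := by
  have a0₁ : ∀ c, a 0 c = 0 := by
    intro c
    have h0 := ha_add₁ 0 0 c
    rw [add_zero] at h0
    have : a (0:W) c + 0 = a 0 c + a 0 c := by rw [add_zero]; exact h0
    exact (add_left_cancel this).symm
  have aneg₁ : ∀ (v : W) c, a (-v) c = - a v c := by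
    intro v c
    have h0 := ha_add₁ v (-v) c
    rw [add_neg_cancel, a0₁] at h0
    exact (neg_eq_of_add_eq_zero_right h0.symm).symm
  have asub₁ : ∀ (v w : W) c, a (v - w) c = a v c - a w c := by
    intro v w c
    rw [sub_eq_add_neg, ha_add₁, aneg₁, sub_eq_add_neg]
  have a0₂ : ∀ X, a X (0:C) = 0 := by
    intro X
    have h0 := ha_add₂ X 0 0
    rw [add_zero] at h0
    have : a X (0:C) + 0 = a X 0 + a X 0 := by rw [add_zero]; exact h0
    exact (add_left_cancel this).symm
  have aneg₂ : ∀ X (c : C), a X (-c) = - a X c := by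
    intro X c
    have h0 := ha_add₂ X c (-c)
    rw [add_neg_cancel, a0₂] at h0
    exact (neg_eq_of_add_eq_zero_right h0.symm).symm
  have asub₂ : ∀ X (c c' : C), a X (c - c') = a X c - a X c' := by
    intro X c c'
    rw [sub_eq_add_neg, ha_add₂, aneg₂, sub_eq_add_neg]
  have hDh : ∀ U V : W, D U V - tor β D U V = D V U + β U V := by
    intro U V; simp only [tor]; abel
  simp only [hess, cov1, curv, hDh, hXX, add_zero, hD_add₁]
  simp only [asub₁, ha_add₁, asub₂, ha_add₂, hβ_act]
  ring


/-- **Weitzenböck formula for the adjoint connection (Lemma A.1,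
\eqref{GenWeitzHatNabla}).**
Same algebraic model: `∇` preserves the subbundle `H` with metric `g` (with
orthonormal frame `e`), `∇̂_Y Z = ∇_Y Z − T(Y,Z)` is the adjoint connection with
sub-Laplacian `L̂ = tr_H ∇̂²_{×,×}` on 1-forms, `L = tr_H ∇²_{×,×}` on functions,
`q Z i j = ⟨q_Z e_i, e_j⟩` the coefficients of `⟨q_Z v₁,v₂⟩ = ½(∇_Z g)(v₁,v₂)`,
and `Ric(Z) = −tr_H R(×,Z)×`.  Then for every function `f` and vector field `Z`:
`L̂ df(Z) − dLf(Z) = 2 tr_H ∇_× df(q_Z ×) + df(Ric(Z))`. -/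
theorem stmt13 {C W : Type*} [CommRing C] [Algebra ℝ C] [AddCommGroup W] [Module C W]
    (a : W → C → C) (β : W → W → W) (D : W → W → W) (g : W → W → C)
    (ha_add₁ : ∀ X Y c, a (X + Y) c = a X c + a Y c)
    (ha_smul₁ : ∀ (f : C) X c, a (f • X) c = f * a X c)
    (ha_add₂ : ∀ X c c', a X (c + c') = a X c + a X c')
    (ha_mul : ∀ X c c', a X (c * c') = a X c * c' + c * a X c')
    (hβ_anti : ∀ X Y, β X Y = - β Y X)
    (hβ_add₁ : ∀ X Y Z, β (X + Y) Z = β X Z + β Y Z)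
    (hβ_leib : ∀ X (f : C) Y, β X (f • Y) = a X f • Y + f • β X Y)
    (hβ_act : ∀ X Y c, a (β X Y) c = a X (a Y c) - a Y (a X c))
    (hβ_jac : ∀ X Y Z, β X (β Y Z) + β Y (β Z X) + β Z (β X Y) = 0)
    (hD_add₁ : ∀ X Y Z, D (X + Y) Z = D X Z + D Y Z)
    (hD_smul₁ : ∀ (f : C) X Y, D (f • X) Y = f • D X Y)
    (hD_add₂ : ∀ X Y Z, D X (Y + Z) = D X Y + D X Z)
    (hD_leib : ∀ X (f : C) Y, D X (f • Y) = a X f • Y + f • D X Y)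
    (hg_symm : ∀ v w, g v w = g w v)
    (hg_addl : ∀ u v w, g (u + v) w = g u w + g v w)
    (hg_smull : ∀ (c : C) v w, g (c • v) w = c * g v w)
    (Hs : Submodule C W)
    (n : ℕ) (e : Fin n → W) (he : ∀ i, e i ∈ Hs)
    (horth : ∀ i j, g (e i) (e j) = if i = j then 1 else 0)
    (hspan : ∀ w ∈ Hs, ∃ c : Fin n → C, w = ∑ i, c i • e i)
    (hpar : ∀ Z Y, Y ∈ Hs → D Z Y ∈ Hs)
    (q : W → Fin n → Fin n → C)
    (hq : ∀ Z i j, q Z i j = (1 / 2 : ℝ) •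
      (a Z (g (e i) (e j)) - g (D Z (e i)) (e j) - g (e i) (D Z (e j))))
    (f : C) (Z : W) :
    (∑ i, hess a (fun X Y => D X Y - tor β D X Y) f (e i) (e i) Z)
        - a Z (subLap a D e f)
      = (2 : C) * (∑ i, ∑ j, q Z i j * cov1 a D f (e i) (e j))
        + a (ric β D e Z) f := by
  classical
  -- abbreviate the adjoint connection
  set Dh : W → W → W := fun X Y => D X Y - tor β D X Y with hDhdef
  -- basic derived facts about `a`
  have a0₂ : ∀ X, a X (0:C) = 0 := fun X => addhom_zero' (a X) (ha_add₂ X)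
  have a1 : ∀ X, a X (1:C) = 0 := by
    intro X
    have h := ha_mul X 1 1
    rw [mul_one, mul_one, one_mul] at h
    exact (left_eq_add.mp h)
  have aneg₁ : ∀ (v : W) (x : C), a (-v) x = - a v x := fun v x =>
    addhom_neg' (fun w => a w x) (fun u w => ha_add₁ u w x) v
  have asumv : ∀ (v : Fin n → W) (x : C), a (∑ k, v k) x = ∑ k, a (v k) x := fun v x =>
    addhom_sum' (fun w => a w x) (fun u w => ha_add₁ u w x) Finset.univ v
  have asumc : ∀ (X : W) (u : Fin n → C), a X (∑ k, u k) = ∑ k, a X (u k) := fun X u =>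
    addhom_sum' (a X) (ha_add₂ X) Finset.univ u
  have Dsum1 : ∀ (v : Fin n → W) (Y : W), D (∑ k, v k) Y = ∑ k, D (v k) Y := fun v Y =>
    addhom_sum' (fun w => D w Y) (fun u w => hD_add₁ u w Y) Finset.univ v
  have Dsum2 : ∀ (X : W) (v : Fin n → W), D X (∑ k, v k) = ∑ k, D X (v k) := fun X v =>
    addhom_sum' (D X) (hD_add₂ X) Finset.univ v
  have gsumv : ∀ (v : Fin n → W) (w : W), g (∑ k, v k) w = ∑ k, g (v k) w := fun v w =>
    addhom_sum' (fun u => g u w) (fun u u' => hg_addl u u' w) Finset.univ v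
  -- β X X = 0
  have βXX : ∀ X, β X X = 0 := by
    intro X
    have h2 : β X X + β X X = 0 := by
      nth_rewrite 2 [hβ_anti X X]
      exact add_neg_cancel _
    have hc : ((1/2:ℝ) • (1:C)) + ((1/2:ℝ) • (1:C)) = 1 := by
      rw [← add_smul]; norm_num
    calc β X X = (1:C) • β X X := (one_smul _ _).symm
      _ = (((1/2:ℝ) • (1:C)) + ((1/2:ℝ) • (1:C))) • β X X := by rw [hc]
      _ = ((1/2:ℝ) • (1:C)) • β X X + ((1/2:ℝ) • (1:C)) • β X X := add_smul _ _ _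
      _ = ((1/2:ℝ) • (1:C)) • (β X X + β X X) := (smul_add _ _ _).symm
      _ = 0 := by rw [h2, smul_zero]
  -- coefficients of D Z (e i) in the frame
  choose c hc0 using fun i => hspan (D Z (e i)) (hpar Z (e i) (he i))
  have hgc : ∀ i j, g (D Z (e i)) (e j) = c i j := by
    intro i j
    rw [hc0 i, gsumv]
    simp [hg_smull, horth]
  have hqv : ∀ i j, q Z i j = (1/2:ℝ) • (-(c i j + c j i)) := by
    intro i j
    rw [hq]
    congr 1
    have h1 : a Z (g (e i) (e j)) = 0 := by
      rw [horth]; split_ifs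
      · exact a1 Z
      · exact a0₂ Z
    rw [h1, hgc i j, hg_symm (e i) (D Z (e j)), hgc j i]
    ring
  have two_half : ∀ x : C, (2:C) * ((1/2:ℝ) • x) = x := by
    intro x
    rw [mul_smul_comm, show (2:C) * x = (2:ℝ) • x from by rw [Algebra.smul_def, map_ofNat],
      smul_smul]
    norm_num
  -- RHS computation
  have hRHS : (2:C) * (∑ i, ∑ j, q Z i j * cov1 a D f (e i) (e j))
      = ∑ i, ∑ k, c i k * (a (D (e i) (e k)) f + a (D (e k) (e i)) f
          - a (e i) (a (e k) f) - a (e k) (a (e i) f)) := by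
    have step1 : (∑ i, ∑ j, q Z i j * cov1 a D f (e i) (e j))
        = (1/2:ℝ) • ∑ i, ∑ j, (-(c i j + c j i)) * cov1 a D f (e i) (e j) := by
      rw [Finset.smul_sum]
      refine Finset.sum_congr rfl fun i _ => ?_
      rw [Finset.smul_sum]
      exact Finset.sum_congr rfl fun j _ => by rw [hqv, smul_mul_assoc]
    rw [step1, two_half]
    calc ∑ i, ∑ j, (-(c i j + c j i)) * cov1 a D f (e i) (e j)
        = ∑ i, ∑ j, ((- c i j) * cov1 a D f (e i) (e j)
            + (- c j i) * cov1 a D f (e i) (e j)) := by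
          exact Finset.sum_congr rfl fun i _ => Finset.sum_congr rfl fun j _ => by ring
      _ = (∑ i, ∑ j, (- c i j) * cov1 a D f (e i) (e j))
            + ∑ i, ∑ j, (- c j i) * cov1 a D f (e i) (e j) := by
          rw [← Finset.sum_add_distrib]
          exact Finset.sum_congr rfl fun i _ => by rw [Finset.sum_add_distrib]
      _ = (∑ i, ∑ j, (- c i j) * cov1 a D f (e i) (e j))
            + ∑ i, ∑ j, (- c i j) * cov1 a D f (e j) (e i) := by
          congr 1
          exact Finset.sum_comm
      _ = ∑ i, ∑ k, c i k * (a (D (e i) (e k)) f + a (D (e k) (e i)) f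
            - a (e i) (a (e k) f) - a (e k) (a (e i) f)) := by
          rw [← Finset.sum_add_distrib]
          refine Finset.sum_congr rfl fun i _ => ?_
          rw [← Finset.sum_add_distrib]
          refine Finset.sum_congr rfl fun k _ => ?_
          simp only [cov1]
          ring
  -- per-index expansion of the Bochner-type term
  have hexp : ∀ i, a (D (e i) (D Z (e i))) f + a (D (D Z (e i)) (e i)) f
        - a (e i) (a (D Z (e i)) f) - a (D Z (e i)) (a (e i) f)
      = ∑ k, c i k * (a (D (e i) (e k)) f + a (D (e k) (e i)) f
          - a (e i) (a (e k) f) - a (e k) (a (e i) f)) := by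
    intro i
    rw [hc0 i]
    simp only [Dsum1, Dsum2, hD_leib, hD_smul₁, asumv, asumc, ha_add₁, ha_smul₁, ha_mul]
    rw [← Finset.sum_add_distrib, ← Finset.sum_sub_distrib, ← Finset.sum_sub_distrib]
    exact Finset.sum_congr rfl fun k _ => by ring
  -- rearranging the left-hand side into a sum of per-index terms
  have hL1 : (∑ i, hess a Dh f (e i) (e i) Z) - a Z (subLap a D e f)
        - a (ric β D e Z) f
      = ∑ i, (hess a Dh f (e i) (e i) Z
          - a Z (a (e i) (a (e i) f) - a (D (e i) (e i)) f)
          + a (curv β D (e i) Z (e i)) f) := by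
    rw [ric, subLap, aneg₁, asumv, asumc, Finset.sum_add_distrib, Finset.sum_sub_distrib]
    ring
  have keyA : (∑ i, hess a Dh f (e i) (e i) Z) - a Z (subLap a D e f)
        - a (ric β D e Z) f
      = ∑ i, ∑ k, c i k * (a (D (e i) (e k)) f + a (D (e k) (e i)) f
          - a (e i) (a (e k) f) - a (e k) (a (e i) f)) := by
    rw [hL1]
    refine Finset.sum_congr rfl fun i _ => ?_
    exact (perpoint a β D ha_add₁ ha_add₂ hβ_act hD_add₁ f (e i) Z (βXX (e i))).trans (hexp i)
  linear_combination keyA - hRHS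
end

section
/- Let (M,H,g) be a sub-Riemannian manifold with metric-preserving complement V and ∇ = ∇^{g,V} with torsion T, curvature R, Ric(Z) = −tr_H R(×,Z)×, δ_H T(Z) = −tr_H(∇_×T)(×,Z). Then for every smooth f: L df(Z) − dLf(Z) = −2 tr_H ∇_× df(T(×,Z)) + df(Ric(Z) + δ_H T(Z)), and consequently ½L|df|²_{g*} = ⟨dLf, df⟩_{g*} + ⟨(Ric + δ_H T)*(df), df⟩_{g*} + |∇df|²_{g*⊗g*} − 2 tr_H ∇_× df(T(×, ♯df)). -/
namespace Stmt14

variable {C W : Type*} [CommRing C] [AddCommGroup W] [Module C W]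


variable {C W : Type*} [CommRing C] [AddCommGroup W] [Module C W]

/-- Torsion `T(X,Y) = ∇_X Y − ∇_Y X − [X,Y]`. -/
def tor (β D : W → W → W) (X Y : W) : W := D X Y - D Y X - β X Y

/-- Curvature `R(X,Y)Z = ∇_X∇_Y Z − ∇_Y∇_X Z − ∇_{[X,Y]}Z`. -/
def curv (β D : W → W → W) (X Y Z : W) : W := D X (D Y Z) - D Y (D X Z) - D (β X Y) Z

/-- `(∇_Y df)(Z) = Y(Zf) − (∇_Y Z)f`. -/
def cov1 (a : W → C → C) (D : W → W → W) (f : C) (Y Z : W) : C :=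
  a Y (a Z f) - a (D Y Z) f

/-- `(∇²_{X,Y} df)(Z) = X((∇_Y df)(Z)) − (∇_Y df)(∇_X Z) − (∇_{∇_X Y} df)(Z)`. -/
def hess (a : W → C → C) (D : W → W → W) (f : C) (X Y Z : W) : C :=
  a X (cov1 a D f Y Z) - cov1 a D f Y (D X Z) - cov1 a D f (D X Y) Z

/-- The connection sub-Laplacian `L f = tr_H ∇²_{×,×} f` on functions. -/
def subLap (a : W → C → C) (D : W → W → W) {n : ℕ} (e : Fin n → W) (f : C) : C :=
  ∑ i, (a (e i) (a (e i) f) - a (D (e i) (e i)) f)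

/-- `Ric(Z) = − tr_H R(×,Z)×`. -/
def ric (β D : W → W → W) {n : ℕ} (e : Fin n → W) (Z : W) : W :=
  - ∑ i, curv β D (e i) Z (e i)

/-- `δ_H T(Z) = − tr_H (∇_× T)(×,Z)`. -/
def deltaT (β D : W → W → W) {n : ℕ} (e : Fin n → W) (Z : W) : W :=
  - ∑ i, (D (e i) (tor β D (e i) Z) - tor β D (D (e i) (e i)) Z
      - tor β D (e i) (D (e i) Z))

end Stmt14

open Stmt14

/-!
In an orthonormal frame `e` of `H`, metric compatibility makes the connection coefficients
`g(∇_X e_i, e_j)` skew in `i, j`, so they contract to zero against anything symmetric.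
Commuting the derivatives in `∇²df(e_i, e_i, Z)` produces curvature and torsion terms (the Ricci
identity). After tracing, the symmetric part `∇df(e_i, ∇_Z e_i) + ∇df(∇_Z e_i, e_i)` drops out by
skewness, and with `T_i = T(e_i, Z)` the asymmetry `∇df(T_i, e_i) - ∇df(e_i, T_i) = df(T(e_i, T_i))`
has vanishing trace; this is the Weitzenböck formula. Skewness also makes `♯` commute with `∇`,
so `X|df|² = 2 ∇df(X, ♯df)` and `½ L|df|² = tr_H ∇²df(♯df) + |∇df|²`; the Weitzenböck formula
at `Z = ♯df` then gives the Bochner formula.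
-/

theorem IsLinearMap.map_sum_smul {R M N ι : Type*} [CommSemiring R] [AddCommMonoid M]
    [AddCommMonoid N] [Module R M] [Module R N] {φ : M → N} (hφ : IsLinearMap R φ)
    (s : Finset ι) (r : ι → R) (v : ι → M) :
    φ (∑ i ∈ s, r i • v i) = ∑ i ∈ s, r i • φ (v i) := by
  calc φ (∑ i ∈ s, r i • v i) = IsLinearMap.mk' φ hφ (∑ i ∈ s, r i • v i) := rfl
    _ = ∑ i ∈ s, r i • φ (v i) := by
      simp only [map_sum, IsLinearMap.mk'_apply, hφ.map_smul]

theorem sum_sum_smul_add_swap_eq_zero {ι R M : Type*} [Fintype ι] [Ring R] [AddCommGroup M]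
    [Module R M] {Γ : ι → ι → R} (hΓ : ∀ i j, Γ i j = -Γ j i) (v : ι → ι → M) :
    ∑ i, ∑ j, Γ i j • (v i j + v j i) = 0 := by
  have hswap : ∑ i, ∑ j, Γ i j • v j i = -∑ i, ∑ j, Γ i j • v i j := by
    rw [Finset.sum_comm]
    simp only [← Finset.sum_neg_distrib, ← neg_smul, ← hΓ]
  simp only [smul_add, Finset.sum_add_distrib, hswap, add_neg_cancel]

namespace Stmt14

variable {C W : Type*} [CommRing C] [AddCommGroup W] [Module C W]

structure IsAnchor (a : W → C → C) : Prop where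
  add_left : ∀ X Y c, a (X + Y) c = a X c + a Y c
  smul_left : ∀ (r : C) X c, a (r • X) c = r * a X c
  add_right : ∀ X c c', a X (c + c') = a X c + a X c'
  mul_right : ∀ X c c', a X (c * c') = a X c * c' + c * a X c'

structure IsConnection (a : W → C → C) (D : W → W → W) : Prop where
  add_left : ∀ X Y Z, D (X + Y) Z = D X Z + D Y Z
  smul_left : ∀ (r : C) X Y, D (r • X) Y = r • D X Y
  add_right : ∀ X Y Z, D X (Y + Z) = D X Y + D X Z
  leibniz : ∀ X (r : C) Y, D X (r • Y) = a X r • Y + r • D X Y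

variable {a : W → C → C} {D : W → W → W}

namespace IsAnchor

theorem isLinearMap_left (ha : IsAnchor a) (c : C) : IsLinearMap C (a · c) :=
  ⟨(ha.add_left · · c), (ha.smul_left · · c)⟩

theorem sub_left (ha : IsAnchor a) (X Y : W) (c : C) : a (X - Y) c = a X c - a Y c :=
  (ha.isLinearMap_left c).map_sub X Y

theorem sum_smul_left (ha : IsAnchor a) {n : ℕ} (r : Fin n → C) (v : Fin n → W) (c : C) :
    a (∑ i, r i • v i) c = ∑ i, r i * a (v i) c :=
  (ha.isLinearMap_left c).map_sum_smul _ r v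

theorem sum_left (ha : IsAnchor a) {n : ℕ} (v : Fin n → W) (c : C) :
    a (∑ i, v i) c = ∑ i, a (v i) c :=
  map_sum (IsLinearMap.mk' _ (ha.isLinearMap_left c)) v _

theorem neg_sum_left (ha : IsAnchor a) {n : ℕ} (v : Fin n → W) (c : C) :
    a (-∑ i, v i) c = -∑ i, a (v i) c := by
  rw [(ha.isLinearMap_left c).map_neg, ha.sum_left]

theorem sub_right (ha : IsAnchor a) (X : W) (c c' : C) : a X (c - c') = a X c - a X c' :=
  (AddMonoidHom.mk' (a X) (ha.add_right X)).map_sub c c'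

theorem sum_right (ha : IsAnchor a) {n : ℕ} (X : W) (c : Fin n → C) :
    a X (∑ i, c i) = ∑ i, a X (c i) :=
  map_sum (AddMonoidHom.mk' (a X) (ha.add_right X)) c _

theorem map_one (ha : IsAnchor a) (X : W) : a X 1 = 0 := by
  simpa using ha.mul_right X 1 1

theorem map_zero (ha : IsAnchor a) (X : W) : a X 0 = 0 :=
  (AddMonoidHom.mk' (a X) (ha.add_right X)).map_zero

end IsAnchor

namespace IsConnection

theorem sub_left (hD : IsConnection a D) (X X' Y : W) : D (X - X') Y = D X Y - D X' Y :=
  IsLinearMap.map_sub (f := (D · Y)) ⟨(hD.add_left · · Y), (hD.smul_left · · Y)⟩ X X'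

theorem sub_right (hD : IsConnection a D) (X Y Y' : W) : D X (Y - Y') = D X Y - D X Y' :=
  (AddMonoidHom.mk' (D X) (hD.add_right X)).map_sub Y Y'

theorem sum_right (hD : IsConnection a D) {n : ℕ} (X : W) (v : Fin n → W) :
    D X (∑ i, v i) = ∑ i, D X (v i) :=
  map_sum (AddMonoidHom.mk' (D X) (hD.add_right X)) v _

end IsConnection

theorem isLinearMap_cov1_left (ha : IsAnchor a) (hD : IsConnection a D) (f : C) (Y : W) :
    IsLinearMap C (fun X => cov1 a D f X Y) where
  map_add X X' := by simp only [cov1, ha.add_left, hD.add_left]; ring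
  map_smul r X := by simp only [cov1, ha.smul_left, hD.smul_left, smul_eq_mul]; ring

theorem isLinearMap_cov1_right (ha : IsAnchor a) (hD : IsConnection a D) (f : C) (X : W) :
    IsLinearMap C (cov1 a D f X) where
  map_add Y Y' := by simp only [cov1, ha.add_left, ha.add_right, hD.add_right]; ring
  map_smul r Y := by
    simp only [cov1, ha.smul_left, ha.add_left, ha.mul_right, hD.leibniz, smul_eq_mul]; ring

theorem cov1_sub_cov1_swap (ha : IsAnchor a) {β : W → W → W}
    (hβ_act : ∀ X Y c, a (β X Y) c = a X (a Y c) - a Y (a X c)) (f : C) (X Y : W) :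
    cov1 a D f X Y - cov1 a D f Y X = -a (tor β D X Y) f := by
  simp only [cov1, tor, ha.sub_left, hβ_act]
  ring

-- The Ricci identity for `∇²df`, before tracing over the frame.
theorem hess_sub_apply_cov1 (ha : IsAnchor a) (hD : IsConnection a D) {β : W → W → W}
    (hβ_act : ∀ X Y c, a (β X Y) c = a X (a Y c) - a Y (a X c)) (f : C) (X Z : W) :
    hess a D f X X Z - a Z (cov1 a D f X X)
      = -(cov1 a D f X (D Z X) + cov1 a D f (D Z X) X)
        - (cov1 a D f X (tor β D X Z) + cov1 a D f (tor β D X Z) X)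
        - a (curv β D X Z X) f
        - a (D X (tor β D X Z) - tor β D (D X X) Z - tor β D X (D X Z)) f := by
  simp only [hess, cov1, tor, curv, hD.sub_left, hD.sub_right, ha.sub_left, ha.sub_right, hβ_act]
  ring

structure IsSkewFrame (D : W → W → W) {n : ℕ} (e : Fin n → W) (Γ : W → Fin n → Fin n → C) :
    Prop where
  expand : ∀ X i, D X (e i) = ∑ j, Γ X i j • e j
  skew : ∀ X i j, Γ X i j = -Γ X j i

namespace IsSkewFrame

variable {n : ℕ} {e : Fin n → W} {Γ : W → Fin n → Fin n → C}

theorem sum_cov1_add_cov1_swap (ha : IsAnchor a) (hD : IsConnection a D)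
    (he : IsSkewFrame D e Γ) (f : C) (X : W) :
    ∑ i, (cov1 a D f (e i) (D X (e i)) + cov1 a D f (D X (e i)) (e i)) = 0 := by
  have hexp : ∀ i, cov1 a D f (e i) (D X (e i)) + cov1 a D f (D X (e i)) (e i)
      = ∑ j, Γ X i j • (cov1 a D f (e i) (e j) + cov1 a D f (e j) (e i)) := by
    intro i
    rw [he.expand, (isLinearMap_cov1_right ha hD f _).map_sum_smul,
      (isLinearMap_cov1_left ha hD f _).map_sum_smul, ← Finset.sum_add_distrib]
    simp only [smul_add]
  simp only [hexp]
  exact sum_sum_smul_add_swap_eq_zero (he.skew X) _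

-- `♯` commutes with `∇`: `∇_X ♯ω = ♯(∇_X ω)`.
theorem D_sum_smul (hD : IsConnection a D) (he : IsSkewFrame D e Γ) {ω : W → C}
    (hω : IsLinearMap C ω) (X : W) :
    D X (∑ k, ω (e k) • e k) = ∑ k, (a X (ω (e k)) - ω (D X (e k))) • e k := by
  have hcancel : ∑ k, (ω (e k) • D X (e k) + ω (D X (e k)) • e k) = 0 := by
    have hexp : ∀ k, ω (e k) • D X (e k) + ω (D X (e k)) • e k
        = ∑ l, Γ X k l • (ω (e k) • e l + ω (e l) • e k) := by
      intro k
      rw [he.expand, hω.map_sum_smul, Finset.smul_sum, Finset.sum_smul, ← Finset.sum_add_distrib]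
      simp only [smul_add, smul_smul, smul_eq_mul, mul_comm]
    simp only [hexp]
    exact sum_sum_smul_add_swap_eq_zero (he.skew X) (fun k l => ω (e k) • e l)
  rw [← sub_eq_zero, hD.sum_right, ← Finset.sum_sub_distrib, ← hcancel]
  refine Finset.sum_congr rfl fun k _ => ?_
  rw [hD.leibniz, sub_smul]
  abel

theorem weitzenbock (ha : IsAnchor a) (hD : IsConnection a D) {β : W → W → W}
    (hβ_act : ∀ X Y c, a (β X Y) c = a X (a Y c) - a Y (a X c)) (he : IsSkewFrame D e Γ)
    (f : C) (Z : W) (htr : ∑ i, tor β D (e i) (tor β D (e i) Z) = 0) :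
    (∑ i, hess a D f (e i) (e i) Z) - a Z (subLap a D e f)
      = -(2 : C) * (∑ i, cov1 a D f (e i) (tor β D (e i) Z))
        + a (ric β D e Z + deltaT β D e Z) f := by
  have hswap : ∀ i, cov1 a D f (tor β D (e i) Z) (e i)
      = cov1 a D f (e i) (tor β D (e i) Z) + a (tor β D (e i) (tor β D (e i) Z)) f := fun i => by
    linear_combination -cov1_sub_cov1_swap ha hβ_act f (e i) (tor β D (e i) Z)
  have htr_f : ∑ i, a (tor β D (e i) (tor β D (e i) Z)) f = 0 := by
    rw [← ha.sum_left, htr, (ha.isLinearMap_left f).map_zero]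
  have hL : subLap a D e f = ∑ i, cov1 a D f (e i) (e i) := rfl
  rw [hL, ha.sum_right, ← Finset.sum_sub_distrib, ric, deltaT, ha.add_left, ha.neg_sum_left,
    ha.neg_sum_left]
  simp only [hess_sub_apply_cov1 ha hD hβ_act, hswap, Finset.sum_sub_distrib,
    Finset.sum_neg_distrib, Finset.sum_add_distrib, he.sum_cov1_add_cov1_swap ha hD, htr_f]
  ring

theorem apply_sum_mul_self (ha : IsAnchor a) (hD : IsConnection a D) (he : IsSkewFrame D e Γ)
    (f : C) (X : W) :
    a X (∑ k, a (e k) f * a (e k) f) = 2 * cov1 a D f X (∑ k, a (e k) f • e k) := by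
  have hcov : a X (a (∑ k, a (e k) f • e k) f)
      = cov1 a D f X (∑ k, a (e k) f • e k) + a (D X (∑ k, a (e k) f • e k)) f := by
    rw [cov1]; ring
  rw [← ha.sum_smul_left, hcov, he.D_sum_smul hD (ha.isLinearMap_left f), ha.sum_smul_left,
    (isLinearMap_cov1_right ha hD f X).map_sum_smul, two_mul]
  simp only [cov1, smul_eq_mul, mul_comm]

theorem subLap_sum_mul_self (ha : IsAnchor a) (hD : IsConnection a D) (he : IsSkewFrame D e Γ)
    (f : C) :
    subLap a D e (∑ k, a (e k) f * a (e k) f)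
      = 2 * ((∑ j, hess a D f (e j) (e j) (∑ k, a (e k) f • e k))
        + ∑ j, ∑ k, cov1 a D f (e j) (e k) * cov1 a D f (e j) (e k)) := by
  have hD_sharp : ∀ j, cov1 a D f (e j) (D (e j) (∑ k, a (e k) f • e k))
      = ∑ k, cov1 a D f (e j) (e k) * cov1 a D f (e j) (e k) := fun j => by
    rw [he.D_sum_smul hD (ha.isLinearMap_left f), (isLinearMap_cov1_right ha hD f _).map_sum_smul]
    rfl
  have hj : ∀ j, a (e j) (a (e j) (∑ k, a (e k) f * a (e k) f))
        - a (D (e j) (e j)) (∑ k, a (e k) f * a (e k) f)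
      = 2 * (hess a D f (e j) (e j) (∑ k, a (e k) f • e k)
        + ∑ k, cov1 a D f (e j) (e k) * cov1 a D f (e j) (e k)) := fun j => by
    rw [he.apply_sum_mul_self ha hD, he.apply_sum_mul_self ha hD, two_mul, ha.add_right,
      ← hD_sharp, hess]
    ring
  rw [subLap, Finset.sum_congr rfl fun j _ => hj j, ← Finset.mul_sum, Finset.sum_add_distrib]

theorem bochner [Algebra ℝ C] (ha : IsAnchor a) (hD : IsConnection a D) {β : W → W → W}
    (hβ_act : ∀ X Y c, a (β X Y) c = a X (a Y c) - a Y (a X c)) (he : IsSkewFrame D e Γ)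
    (f : C) (htr : ∑ i, tor β D (e i) (tor β D (e i) (∑ j, a (e j) f • e j)) = 0) :
    (1 / 2 : ℝ) • subLap a D e (∑ i, a (e i) f * a (e i) f)
      = (∑ i, a (e i) (subLap a D e f) * a (e i) f)
        + a (ric β D e (∑ i, a (e i) f • e i) + deltaT β D e (∑ i, a (e i) f • e i)) f
        + (∑ i, ∑ j, cov1 a D f (e i) (e j) * cov1 a D f (e i) (e j))
        - (2 : C) * ∑ i, cov1 a D f (e i) (tor β D (e i) (∑ j, a (e j) f • e j)) := by
  have hsharp : a (∑ i, a (e i) f • e i) (subLap a D e f)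
      = ∑ i, a (e i) (subLap a D e f) * a (e i) f := by
    rw [ha.sum_smul_left]
    simp only [mul_comm]
  rw [he.subLap_sum_mul_self ha hD, two_mul, ← two_smul ℝ, smul_smul, one_div,
    inv_mul_cancel₀ two_ne_zero, one_smul]
  linear_combination he.weitzenbock ha hD hβ_act f _ htr + hsharp

end IsSkewFrame

section Frame

variable {g : W → W → C} {Hs : Submodule C W} {n : ℕ} {e : Fin n → W}

theorem eq_sum_smul_of_orthonormal (hg_addl : ∀ u v w, g (u + v) w = g u w + g v w)
    (hg_smull : ∀ (c : C) v w, g (c • v) w = c * g v w)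
    (horth : ∀ i j, g (e i) (e j) = if i = j then 1 else 0)
    (hspan : ∀ w ∈ Hs, ∃ c : Fin n → C, w = ∑ i, c i • e i) {Y : W} (hY : Y ∈ Hs) :
    Y = ∑ j, g Y (e j) • e j := by
  obtain ⟨c, rfl⟩ := hspan Y hY
  have hcoeff : ∀ j, g (∑ i, c i • e i) (e j) = c j := fun j => by
    rw [IsLinearMap.map_sum_smul (φ := (g · (e j))) ⟨(hg_addl · · _), (hg_smull · · _)⟩]
    simp [horth]
  simp only [hcoeff]

theorem isSkewFrame_of_orthonormal (ha : IsAnchor a) (hg_symm : ∀ v w, g v w = g w v)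
    (hg_addl : ∀ u v w, g (u + v) w = g u w + g v w)
    (hg_smull : ∀ (c : C) v w, g (c • v) w = c * g v w) (he : ∀ i, e i ∈ Hs)
    (horth : ∀ i j, g (e i) (e j) = if i = j then 1 else 0)
    (hspan : ∀ w ∈ Hs, ∃ c : Fin n → C, w = ∑ i, c i • e i)
    (hpar : ∀ Z Y, Y ∈ Hs → D Z Y ∈ Hs)
    (hcompat : ∀ Z Y₁ Y₂, Y₁ ∈ Hs → Y₂ ∈ Hs →
      a Z (g Y₁ Y₂) = g (D Z Y₁) Y₂ + g Y₁ (D Z Y₂)) :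
    IsSkewFrame D e (fun X i j => g (D X (e i)) (e j)) where
  expand X i := eq_sum_smul_of_orthonormal hg_addl hg_smull horth hspan (hpar X _ (he i))
  skew X i j := by
    have hconst : a X (g (e i) (e j)) = 0 := by
      rw [horth]
      split_ifs
      exacts [ha.map_one X, ha.map_zero X]
    linear_combination -hcompat X _ _ (he i) (he j) + hconst - hg_symm (e i) (D X (e j))

end Frame

theorem tor_add_right (hD : IsConnection a D) {β : W → W → W} (hβ_anti : ∀ X Y, β X Y = -β Y X)
    (hβ_add₁ : ∀ X Y Z, β (X + Y) Z = β X Z + β Y Z) (X Y Y' : W) :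
    tor β D X (Y + Y') = tor β D X Y + tor β D X Y' := by
  simp only [tor, hD.add_left, hD.add_right]
  rw [hβ_anti X, hβ_add₁, hβ_anti X Y, hβ_anti X Y']
  abel

theorem tor_mem_of_mem_left (hD : IsConnection a D) {β : W → W → W}
    (hβ_anti : ∀ X Y, β X Y = -β Y X) (hβ_add₁ : ∀ X Y Z, β (X + Y) Z = β X Z + β Y Z)
    {Hs Vs : Submodule C W} (hsup : Hs ⊔ Vs = ⊤)
    (htor_HH : ∀ X Y, X ∈ Hs → Y ∈ Hs → tor β D X Y ∈ Vs)
    (htor_HV : ∀ X Y, X ∈ Hs → Y ∈ Vs → tor β D X Y = 0) {X : W} (hX : X ∈ Hs) (Y : W) :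
    tor β D X Y ∈ Vs := by
  obtain ⟨h, hh, v, hv, rfl⟩ := Submodule.mem_sup.1 (hsup ▸ Submodule.mem_top : Y ∈ Hs ⊔ Vs)
  rw [tor_add_right hD hβ_anti hβ_add₁, htor_HV X v hX hv, add_zero]
  exact htor_HH X h hX hh

end Stmt14

open Stmt14

theorem stmt14_general {C W : Type*} [CommRing C] [Algebra ℝ C] [AddCommGroup W] [Module C W]
    (a : W → C → C) (β : W → W → W) (D : W → W → W) (g : W → W → C)
    (ha_add₁ : ∀ X Y c, a (X + Y) c = a X c + a Y c)
    (ha_smul₁ : ∀ (f : C) X c, a (f • X) c = f * a X c)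
    (ha_add₂ : ∀ X c c', a X (c + c') = a X c + a X c')
    (ha_mul : ∀ X c c', a X (c * c') = a X c * c' + c * a X c')
    (hβ_anti : ∀ X Y, β X Y = - β Y X)
    (hβ_add₁ : ∀ X Y Z, β (X + Y) Z = β X Z + β Y Z)
    (hβ_act : ∀ X Y c, a (β X Y) c = a X (a Y c) - a Y (a X c))
    (hD_add₁ : ∀ X Y Z, D (X + Y) Z = D X Z + D Y Z)
    (hD_smul₁ : ∀ (f : C) X Y, D (f • X) Y = f • D X Y)
    (hD_add₂ : ∀ X Y Z, D X (Y + Z) = D X Y + D X Z)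
    (hD_leib : ∀ X (f : C) Y, D X (f • Y) = a X f • Y + f • D X Y)
    (hg_symm : ∀ v w, g v w = g w v)
    (hg_addl : ∀ u v w, g (u + v) w = g u w + g v w)
    (hg_smull : ∀ (c : C) v w, g (c • v) w = c * g v w)
    (Hs : Submodule C W)
    (n : ℕ) (e : Fin n → W) (he : ∀ i, e i ∈ Hs)
    (horth : ∀ i j, g (e i) (e j) = if i = j then 1 else 0)
    (hspan : ∀ w ∈ Hs, ∃ c : Fin n → C, w = ∑ i, c i • e i)
    (hpar : ∀ Z Y, Y ∈ Hs → D Z Y ∈ Hs)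
    (Vs : Submodule C W) (prH : W →ₗ[C] W)
    (hprH_mem : ∀ x, prH x ∈ Hs) (hprV : ∀ x, x - prH x ∈ Vs)
    -- `V` metric preserving: `∇` is compatible with `(H,g)` in all directions
    (hcompat : ∀ Z Y₁ Y₂, Y₁ ∈ Hs → Y₂ ∈ Hs →
      a Z (g Y₁ Y₂) = g (D Z Y₁) Y₂ + g Y₁ (D Z Y₂))
    -- torsion properties of `∇^{g,V}`
    (htor_HH : ∀ X Y, X ∈ Hs → Y ∈ Hs → tor β D X Y ∈ Vs)
    (htor_HV : ∀ X Y, X ∈ Hs → Y ∈ Vs → tor β D X Y = 0)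
    (f : C) (Z : W) :
    -- Weitzenböck formula
    ((∑ i, hess a D f (e i) (e i) Z) - a Z (subLap a D e f)
      = - (2 : C) * (∑ i, cov1 a D f (e i) (tor β D (e i) Z))
        + a (ric β D e Z + deltaT β D e Z) f) ∧
    -- Bochner formula for `½ L |df|²`
    ((1 / 2 : ℝ) • subLap a D e (∑ i, a (e i) f * a (e i) f)
      = (∑ i, a (e i) (subLap a D e f) * a (e i) f)
        + a (ric β D e (∑ i, a (e i) f • e i)
            + deltaT β D e (∑ i, a (e i) f • e i)) f
        + (∑ i, ∑ j, cov1 a D f (e i) (e j) * cov1 a D f (e i) (e j))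
        - (2 : C) * ∑ i, cov1 a D f (e i) (tor β D (e i) (∑ j, a (e j) f • e j))) := by
  have ha : IsAnchor a := ⟨ha_add₁, ha_smul₁, ha_add₂, ha_mul⟩
  have hD : IsConnection a D := ⟨hD_add₁, hD_smul₁, hD_add₂, hD_leib⟩
  have hframe := isSkewFrame_of_orthonormal ha hg_symm hg_addl hg_smull he horth hspan hpar hcompat
  have hsup : Hs ⊔ Vs = ⊤ := Submodule.eq_top_iff'.2 fun x =>
    Submodule.mem_sup.2 ⟨prH x, hprH_mem x, x - prH x, hprV x, add_sub_cancel _ _⟩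
  have htr : ∀ Z, ∑ i, tor β D (e i) (tor β D (e i) Z) = 0 := fun Z =>
    Finset.sum_eq_zero fun i _ => htor_HV _ _ (he i)
      (tor_mem_of_mem_left hD hβ_anti hβ_add₁ hsup htor_HH htor_HV (he i) Z)
  exact ⟨hframe.weitzenbock ha hD hβ_act f Z (htr Z), hframe.bochner ha hD hβ_act f (htr _)⟩

/-- **Bochner–Weitzenböck formula for `∇ = ∇^{g,V}` with a metric-preserving
complement (Lemma 4.4).**
Algebraic model: `C` = functions, `W` = vector fields, `Hs`/`Vs` the horizontal
and vertical submodules with projection `prH`, `e` an orthonormal frame of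
`Hs`, `∇ = ∇^{g,V}` encoded by: `H` parallel, compatibility `∇g = 0` on `H`
(in every direction, since `V` is metric preserving, so `q ≡ 0`),
`T(H,H) ⊆ V` and `T(H,V) = 0`.  Then
`L df(Z) − dLf(Z) = −2 tr_H ∇_× df(T(×,Z)) + df(Ric(Z) + δ_H T(Z))`, and
consequently
`½L|df|²_{g*} = ⟨dLf,df⟩_{g*} + ⟨(Ric+δ_H T)^*(df),df⟩_{g*} + |∇df|²_{g*⊗g*}`
`  − 2 tr_H ∇_× df(T(×,♯df))`,
with `♯df = ∑ i (e_i f) e_i`, `|df|²_{g*} = ∑ i (e_i f)²`. -/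
theorem stmt14 {C W : Type*} [CommRing C] [Algebra ℝ C] [AddCommGroup W] [Module C W]
    (a : W → C → C) (β : W → W → W) (D : W → W → W) (g : W → W → C)
    (ha_add₁ : ∀ X Y c, a (X + Y) c = a X c + a Y c)
    (ha_smul₁ : ∀ (f : C) X c, a (f • X) c = f * a X c)
    (ha_add₂ : ∀ X c c', a X (c + c') = a X c + a X c')
    (ha_mul : ∀ X c c', a X (c * c') = a X c * c' + c * a X c')
    (hβ_anti : ∀ X Y, β X Y = - β Y X)
    (hβ_add₁ : ∀ X Y Z, β (X + Y) Z = β X Z + β Y Z)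
    (hβ_leib : ∀ X (f : C) Y, β X (f • Y) = a X f • Y + f • β X Y)
    (hβ_act : ∀ X Y c, a (β X Y) c = a X (a Y c) - a Y (a X c))
    (hβ_jac : ∀ X Y Z, β X (β Y Z) + β Y (β Z X) + β Z (β X Y) = 0)
    (hD_add₁ : ∀ X Y Z, D (X + Y) Z = D X Z + D Y Z)
    (hD_smul₁ : ∀ (f : C) X Y, D (f • X) Y = f • D X Y)
    (hD_add₂ : ∀ X Y Z, D X (Y + Z) = D X Y + D X Z)
    (hD_leib : ∀ X (f : C) Y, D X (f • Y) = a X f • Y + f • D X Y)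
    (hg_symm : ∀ v w, g v w = g w v)
    (hg_addl : ∀ u v w, g (u + v) w = g u w + g v w)
    (hg_smull : ∀ (c : C) v w, g (c • v) w = c * g v w)
    (Hs : Submodule C W)
    (n : ℕ) (e : Fin n → W) (he : ∀ i, e i ∈ Hs)
    (horth : ∀ i j, g (e i) (e j) = if i = j then 1 else 0)
    (hspan : ∀ w ∈ Hs, ∃ c : Fin n → C, w = ∑ i, c i • e i)
    (hpar : ∀ Z Y, Y ∈ Hs → D Z Y ∈ Hs)
    (Vs : Submodule C W) (prH : W →ₗ[C] W)
    (hprH_mem : ∀ x, prH x ∈ Hs) (hprH_id : ∀ x ∈ Hs, prH x = x)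
    (hprH_ker : ∀ v ∈ Vs, prH v = 0) (hprV : ∀ x, x - prH x ∈ Vs)
    (hparV : ∀ Z Y, Y ∈ Vs → D Z Y ∈ Vs)
    -- `V` metric preserving: `∇` is compatible with `(H,g)` in all directions
    (hcompat : ∀ Z Y₁ Y₂, Y₁ ∈ Hs → Y₂ ∈ Hs →
      a Z (g Y₁ Y₂) = g (D Z Y₁) Y₂ + g Y₁ (D Z Y₂))
    -- torsion properties of `∇^{g,V}`
    (htor_HH : ∀ X Y, X ∈ Hs → Y ∈ Hs → tor β D X Y ∈ Vs)
    (htor_HV : ∀ X Y, X ∈ Hs → Y ∈ Vs → tor β D X Y = 0)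
    (f : C) (Z : W) :
    -- Weitzenböck formula
    ((∑ i, hess a D f (e i) (e i) Z) - a Z (subLap a D e f)
      = - (2 : C) * (∑ i, cov1 a D f (e i) (tor β D (e i) Z))
        + a (ric β D e Z + deltaT β D e Z) f) ∧
    -- Bochner formula for `½ L |df|²`
    ((1 / 2 : ℝ) • subLap a D e (∑ i, a (e i) f * a (e i) f)
      = (∑ i, a (e i) (subLap a D e f) * a (e i) f)
        + a (ric β D e (∑ i, a (e i) f • e i)
            + deltaT β D e (∑ i, a (e i) f • e i)) f
        + (∑ i, ∑ j, cov1 a D f (e i) (e j) * cov1 a D f (e i) (e j))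
        - (2 : C) * ∑ i, cov1 a D f (e i) (tor β D (e i) (∑ j, a (e j) f • e j))) :=
  stmt14_general a β D g ha_add₁ ha_smul₁ ha_add₂ ha_mul hβ_anti hβ_add₁ hβ_act hD_add₁ hD_smul₁
    hD_add₂ hD_leib hg_symm hg_addl hg_smull Hs n e he horth hspan hpar Vs prH hprH_mem hprV hcompat
    htor_HH htor_HV f Z
end
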